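/- arXiv:math/9712278 — 2 statements merged into one kernel-verified Lean document; each statement's English description precedes it below -/
import Mathlib

section
/- Let ε > 0 and let u: ℝ² × I → ℂ (I ⊆ ℝ an open interval) be smooth, ℤ²-periodic in the space variable, and solve the Ginzburg–Landau–Schrödinger equation i∂_t u − Δu + ε⁻²(|u|²−1)u = 0, where ℂ is identified with ℝ² and a·b = Re(ā b) denotes the real inner product. Then for every smooth ℤ²-periodic η: ℝ² → ℝ, (d/dt) ∫_{[0,1)²} η · det Du dx = ∫_{[0,1)²} Σ_{j,k,l ∈ {1,2}} (∂_{x_j}∂_{x_l}η) 𝕁_{jk} ( ∂_{x_k}u · ∂_{x_l}u ) dx for all t ∈ I, where 𝕁 is the matrix with 𝕁₁₂ = 1, 𝕁₂₁ = −1, 𝕁₁₁ = 𝕁₂₂ = 0 and det Du is the 2×2 spatial Jacobian determinant. -/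
noncomputable section

/-- Unit direction in `x₁`. -/
def e1 : ℝ × ℝ × ℝ := (1, 0, 0)
/-- Unit direction in `x₂`. -/
def e2 : ℝ × ℝ × ℝ := (0, 1, 0)
/-- Unit direction in time `t`. -/
def et : ℝ × ℝ × ℝ := (0, 0, 1)

/-- Directional (partial) derivative in the direction `v`. -/
def pd {E : Type*} [NormedAddCommGroup E] [NormedSpace ℝ E]
    (v : ℝ × ℝ × ℝ) (f : ℝ × ℝ × ℝ → E) (p : ℝ × ℝ × ℝ) : E := fderiv ℝ f p v

/-- The real inner product on `ℂ ≃ ℝ²`: `a·b = Re(ā b)`. -/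
def rdot (a b : ℂ) : ℝ := ((starRingEnd ℂ) a * b).re

/-- Spatial Laplacian. -/
def lap (u : ℝ × ℝ × ℝ → ℂ) (p : ℝ × ℝ × ℝ) : ℂ :=
  pd e1 (pd e1 u) p + pd e2 (pd e2 u) p

/-- `u` is ℤ²-periodic in the space variables. -/
def SpacePeriodic (u : ℝ × ℝ × ℝ → ℂ) : Prop :=
  ∀ p : ℝ × ℝ × ℝ, u (p + e1) = u p ∧ u (p + e2) = u p

/-- `u` solves the Ginzburg–Landau–Schrödinger equation
`i∂ₜu − Δu + ε⁻²(|u|²−1)u = 0` at the point `p`. -/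
def GLSeq (ε : ℝ) (u : ℝ × ℝ × ℝ → ℂ) (p : ℝ × ℝ × ℝ) : Prop :=
  Complex.I * pd et u p - lap u p + ((ε : ℂ) ^ 2)⁻¹ * (((‖u p‖ : ℝ) : ℂ) ^ 2 - 1) * u p = 0

/-- The Ginzburg–Landau energy density `E^ε(u) = ½|Du|² + (1/(4ε²))(|u|²−1)²`. -/
def Edens (ε : ℝ) (u : ℝ × ℝ × ℝ → ℂ) (p : ℝ × ℝ × ℝ) : ℝ :=
  (1 / 2) * (‖pd e1 u p‖ ^ 2 + ‖pd e2 u p‖ ^ 2) + (1 / (4 * ε ^ 2)) * (‖u p‖ ^ 2 - 1) ^ 2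

open MeasureTheory

/-- The spatial unit directions indexed by `Fin 2`. -/
def dir : Fin 2 → ℝ × ℝ × ℝ := ![e1, e2]

/-- The planar unit directions indexed by `Fin 2`. -/
def dir2 : Fin 2 → ℝ × ℝ := ![(1, 0), (0, 1)]

/-- Directional (partial) derivative on `ℝ²` in the direction `v`. -/
def pdx {E : Type*} [NormedAddCommGroup E] [NormedSpace ℝ E]
    (v : ℝ × ℝ) (f : ℝ × ℝ → E) (x : ℝ × ℝ) : E := fderiv ℝ f x v

/-- The matrix `𝕁` with `𝕁₁₂ = 1, 𝕁₂₁ = −1, 𝕁₁₁ = 𝕁₂₂ = 0`. -/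
def Jmat : Fin 2 → Fin 2 → ℝ := ![![0, 1], ![-1, 0]]

/-- The spatial Jacobian determinant `Ju = det Du` of `u : ℝ² × I → ℂ ≃ ℝ²`. -/
def Jdet (u : ℝ × ℝ × ℝ → ℂ) (p : ℝ × ℝ × ℝ) : ℝ :=
  (pd e1 u p).re * (pd e2 u p).im - (pd e1 u p).im * (pd e2 u p).re

/-- The fundamental domain `[0,1)²` of the torus. -/
def fundSq : Set (ℝ × ℝ) := Set.Ico (0:ℝ) 1 ×ˢ Set.Ico (0:ℝ) 1


section Toolkit
open Set MeasureTheory Complex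

variable {X : Type*} [NormedAddCommGroup X] [NormedSpace ℝ X]

lemma rdot_eq (a b : ℂ) : rdot a b = a.re * b.re + a.im * b.im := by
  simp [rdot, Complex.mul_re]

/-- cross product of two complex numbers viewed as plane vectors -/
def crossR (a b : ℂ) : ℝ := a.re * b.im - a.im * b.re

lemma crossR_eq_rdot (a b : ℂ) : crossR a b = rdot (Complex.I * a) b := by
  simp [crossR, rdot_eq]; ring

lemma rdot_comm (a b : ℂ) : rdot a b = rdot b a := by simp [rdot_eq]; ring

lemma rdot_self (a : ℂ) : rdot a a = ‖a‖ ^ 2 := by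
  rw [rdot_eq, ← Complex.normSq_apply, ← Complex.sq_norm]

lemma crossR_swap (a b : ℂ) : crossR a b = - crossR b a := by simp [crossR]; ring

lemma rdot_sub_left (a b c : ℂ) : rdot (a - b) c = rdot a c - rdot b c := by
  simp [rdot_eq]; ring

lemma rdot_add_left (a b c : ℂ) : rdot (a + b) c = rdot a c + rdot b c := by
  simp [rdot_eq]; ring

lemma rdot_real_mul (r : ℝ) (a b : ℂ) : rdot ((r : ℂ) * a) b = r * rdot a b := by
  simp [rdot_eq]; ring

lemma fd_mul {f g : X → ℝ} {x v : X} (hf : DifferentiableAt ℝ f x)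
    (hg : DifferentiableAt ℝ g x) :
    fderiv ℝ (fun q => f q * g q) x v = fderiv ℝ f x v * g x + f x * fderiv ℝ g x v := by
  rw [fderiv_fun_mul hf hg]
  simp [smul_eq_mul]
  ring

lemma fd_re {F : X → ℂ} {x v : X} (hF : DifferentiableAt ℝ F x) :
    fderiv ℝ (fun q => (F q).re) x v = (fderiv ℝ F x v).re := by
  have h := (Complex.reCLM.hasFDerivAt.comp x hF.hasFDerivAt).fderiv
  have : fderiv ℝ (fun q => (F q).re) x = Complex.reCLM.comp (fderiv ℝ F x) := h
  rw [this]; rfl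

lemma fd_im {F : X → ℂ} {x v : X} (hF : DifferentiableAt ℝ F x) :
    fderiv ℝ (fun q => (F q).im) x v = (fderiv ℝ F x v).im := by
  have h := (Complex.imCLM.hasFDerivAt.comp x hF.hasFDerivAt).fderiv
  have : fderiv ℝ (fun q => (F q).im) x = Complex.imCLM.comp (fderiv ℝ F x) := h
  rw [this]; rfl

lemma diff_re {F : X → ℂ} {x : X} (hF : DifferentiableAt ℝ F x) :
    DifferentiableAt ℝ (fun q => (F q).re) x :=
  (Complex.reCLM.differentiableAt).comp x hF

lemma diff_im {F : X → ℂ} {x : X} (hF : DifferentiableAt ℝ F x) :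
    DifferentiableAt ℝ (fun q => (F q).im) x :=
  (Complex.imCLM.differentiableAt).comp x hF

lemma fd_rdot {F G : X → ℂ} {x v : X} (hF : DifferentiableAt ℝ F x)
    (hG : DifferentiableAt ℝ G x) :
    fderiv ℝ (fun q => rdot (F q) (G q)) x v
      = rdot (fderiv ℝ F x v) (G x) + rdot (F x) (fderiv ℝ G x v) := by
  have : (fun q => rdot (F q) (G q))
      = fun q => (F q).re * (G q).re + (F q).im * (G q).im := by
    funext q; rw [rdot_eq]
  rw [this, fderiv_fun_add ((diff_re hF).fun_mul (diff_re hG)) ((diff_im hF).fun_mul (diff_im hG))]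
  simp only [ContinuousLinearMap.add_apply]
  rw [fd_mul (diff_re hF) (diff_re hG), fd_mul (diff_im hF) (diff_im hG),
    fd_re hF, fd_im hF, fd_re hG, fd_im hG, rdot_eq, rdot_eq]
  ring

lemma fd_crossR {F G : X → ℂ} {x v : X} (hF : DifferentiableAt ℝ F x)
    (hG : DifferentiableAt ℝ G x) :
    fderiv ℝ (fun q => crossR (F q) (G q)) x v
      = crossR (fderiv ℝ F x v) (G x) + crossR (F x) (fderiv ℝ G x v) := by
  have : (fun q => crossR (F q) (G q))
      = fun q => (F q).re * (G q).im - (F q).im * (G q).re := by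
    funext q; rfl
  rw [this, fderiv_fun_sub ((diff_re hF).fun_mul (diff_im hG)) ((diff_im hF).fun_mul (diff_re hG))]
  simp only [ContinuousLinearMap.sub_apply]
  rw [fd_mul (diff_re hF) (diff_im hG), fd_mul (diff_im hF) (diff_re hG),
    fd_re hF, fd_im hF, fd_re hG, fd_im hG]
  simp only [crossR]
  ring

end Toolkit

section Smooth
open Set Complex
variable {X E : Type*} [NormedAddCommGroup X] [NormedSpace ℝ X]
  [NormedAddCommGroup E] [NormedSpace ℝ E]

lemma contDiffOn_fd {f : X → E} {s : Set X} (hf : ContDiffOn ℝ (⊤ : ℕ∞) f s) (hs : IsOpen s) (v : X) :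
    ContDiffOn ℝ (⊤ : ℕ∞) (fun x => fderiv ℝ f x v) s :=
  (hf.fderiv_of_isOpen hs (by simp)).clm_apply contDiffOn_const

lemma contDiff_fd {f : X → E} (hf : ContDiff ℝ (⊤ : ℕ∞) f) (v : X) :
    ContDiff ℝ (⊤ : ℕ∞) (fun x => fderiv ℝ f x v) :=
  (hf.fderiv_right (by simp)).clm_apply contDiff_const

lemma diffAt_of_contDiffOn {f : X → E} {s : Set X} (hf : ContDiffOn ℝ (⊤ : ℕ∞) f s) (hs : IsOpen s)
    {x : X} (hx : x ∈ s) : DifferentiableAt ℝ f x :=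
  (hf.contDiffAt (hs.mem_nhds hx)).differentiableAt (by simp)

lemma fd_apply_comm {f : X → E} {s : Set X} (hf : ContDiffOn ℝ (⊤ : ℕ∞) f s) (hs : IsOpen s)
    {x : X} (hx : x ∈ s) (v w : X) :
    fderiv ℝ (fun q => fderiv ℝ f q w) x v = fderiv ℝ (fun q => fderiv ℝ f q v) x w := by
  have hsymm : IsSymmSndFDerivAt ℝ f x :=
    (hf.contDiffAt (hs.mem_nhds hx)).isSymmSndFDerivAt (by rw [minSmoothness_of_isRCLikeNormedField]; exact WithTop.coe_le_coe.mpr (le_top : (2:ℕ∞) ≤ ⊤))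
  have hd : DifferentiableAt ℝ (fderiv ℝ f) x :=
    diffAt_of_contDiffOn (hf.fderiv_of_isOpen hs (by simp)) hs hx
  have key : ∀ z : X, fderiv ℝ (fun q => fderiv ℝ f q z) x
      = (fderiv ℝ (fderiv ℝ f) x).flip z := by
    intro z
    rw [fderiv_clm_apply hd (differentiableAt_const z)]
    simp
  rw [key, key]
  exact hsymm v w

lemma fd_shift {f : X → E} {s : Set X} (hs : IsOpen s) {c : X}
    (hper : ∀ q ∈ s, f (q + c) = f q) {x : X}
    (hdf : DifferentiableAt ℝ f (x + c)) (hx : x ∈ s) :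
    fderiv ℝ f (x + c) = fderiv ℝ f x := by
  have h1 : HasFDerivAt (fun q => f (q + c)) (fderiv ℝ f (x + c)) x := by
    have := (hdf.hasFDerivAt).comp x ((hasFDerivAt_id x).add_const c)
    exact this
  have h2 : (fun q => f (q + c)) =ᶠ[nhds x] f := by
    filter_upwards [hs.mem_nhds hx] with q hq using hper q hq
  exact ((h1.congr_of_eventuallyEq h2.symm).fderiv).symm

/-- the embedding of the spatial slice at time t -/
def iot (t : ℝ) (x : ℝ × ℝ) : ℝ × ℝ × ℝ := (x.1, x.2, t)

lemma hasFDerivAt_iot (t : ℝ) (x : ℝ × ℝ) :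
    HasFDerivAt (iot t)
      ((ContinuousLinearMap.fst ℝ ℝ ℝ).prod
        ((ContinuousLinearMap.snd ℝ ℝ ℝ).prod 0)) x :=
  (hasFDerivAt_fst).prodMk ((hasFDerivAt_snd).prodMk (hasFDerivAt_const t x))

lemma contDiff_iot (t : ℝ) : ContDiff ℝ (⊤ : ℕ∞) (iot t) :=
  contDiff_fst.prodMk (contDiff_snd.prodMk contDiff_const)

lemma pdx_slice {f : ℝ × ℝ × ℝ → E} {t : ℝ} {x : ℝ × ℝ}
    (hf : DifferentiableAt ℝ f (x.1, x.2, t)) (v : ℝ × ℝ) :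
    pdx v (fun y => f (y.1, y.2, t)) x = pd (v.1, v.2, 0) f (x.1, x.2, t) := by
  have h := (hf.hasFDerivAt.comp x (hasFDerivAt_iot t x)).fderiv
  have h2 : (fun y : ℝ × ℝ => f (y.1, y.2, t)) = f ∘ iot t := rfl
  unfold pdx pd
  rw [h2, h]
  rfl

lemma pdx_slice1 {f : ℝ × ℝ × ℝ → E} {t : ℝ} {x : ℝ × ℝ}
    (hf : DifferentiableAt ℝ f (x.1, x.2, t)) :
    pdx (1, 0) (fun y : ℝ × ℝ => f (y.1, y.2, t)) x = pd e1 f (x.1, x.2, t) :=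
  pdx_slice hf (1, 0)

lemma pdx_slice2 {f : ℝ × ℝ × ℝ → E} {t : ℝ} {x : ℝ × ℝ}
    (hf : DifferentiableAt ℝ f (x.1, x.2, t)) :
    pdx (0, 1) (fun y : ℝ × ℝ => f (y.1, y.2, t)) x = pd e2 f (x.1, x.2, t) :=
  pdx_slice hf (0, 1)

lemma contDiff_slice {f : ℝ × ℝ × ℝ → E} {s : Set (ℝ × ℝ × ℝ)}
    (hf : ContDiffOn ℝ (⊤ : ℕ∞) f s) {t : ℝ} (hmap : ∀ x : ℝ × ℝ, (x.1, x.2, t) ∈ s) :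
    ContDiff ℝ (⊤ : ℕ∞) (fun y : ℝ × ℝ => f (y.1, y.2, t)) := by
  rw [← contDiffOn_univ]
  exact hf.comp ((contDiff_iot t).contDiffOn) (fun x _ => hmap x)

lemma hasDerivAt_tslice {f : ℝ × ℝ × ℝ → E} {x : ℝ × ℝ} {τ : ℝ}
    (hf : DifferentiableAt ℝ f (x.1, x.2, τ)) :
    HasDerivAt (fun s => f (x.1, x.2, s)) (pd et f (x.1, x.2, τ)) τ := by
  have hγ : HasDerivAt (fun s : ℝ => ((x.1 : ℝ), ((x.2 : ℝ), s))) ((0:ℝ), ((0:ℝ), (1:ℝ))) τ :=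
    (hasDerivAt_const τ x.1).prodMk ((hasDerivAt_const τ x.2).prodMk (hasDerivAt_id τ))
  have := hf.hasFDerivAt.comp_hasDerivAt τ hγ
  exact this

end Smooth

section Core
open Set

lemma integrableOn_fundSq {f : ℝ × ℝ → ℝ} (hf : Continuous f) :
    IntegrableOn f fundSq volume := by
  have h1 : IntegrableOn f (Icc (0:ℝ) 1 ×ˢ Icc (0:ℝ) 1) volume :=
    hf.continuousOn.integrableOn_compact (isCompact_Icc.prod isCompact_Icc)
  exact h1.mono_set (Set.prod_mono Ico_subset_Icc_self Ico_subset_Icc_self)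

lemma hasDerivAt_slice2 {f : ℝ × ℝ → ℝ} (hf : ContDiff ℝ (⊤ : ℕ∞) f) (a b : ℝ) :
    HasDerivAt (fun s => f (a, s)) (pdx (0,1) f (a, b)) b := by
  have hγ : HasDerivAt (fun s : ℝ => ((a : ℝ), s)) ((0:ℝ), (1:ℝ)) b :=
    (hasDerivAt_const b a).prodMk (hasDerivAt_id b)
  exact ((hf.differentiable (by simp) (a, b)).hasFDerivAt).comp_hasDerivAt b hγ

lemma hasDerivAt_slice1 {f : ℝ × ℝ → ℝ} (hf : ContDiff ℝ (⊤ : ℕ∞) f) (a b : ℝ) :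
    HasDerivAt (fun s => f (s, b)) (pdx (1,0) f (a, b)) a := by
  have hγ : HasDerivAt (fun s : ℝ => (s, (b : ℝ))) ((1:ℝ), (0:ℝ)) a :=
    (hasDerivAt_id a).prodMk (hasDerivAt_const a b)
  exact ((hf.differentiable (by simp) (a, b)).hasFDerivAt).comp_hasDerivAt a hγ

lemma line_integral_zero {g : ℝ → ℝ} {g' : ℝ → ℝ} (hg : ∀ s, HasDerivAt g (g' s) s)
    (hc : Continuous g') (hper : g 1 = g 0) :
    ∫ s in Ico (0:ℝ) 1, g' s = 0 := by
  rw [MeasureTheory.integral_Ico_eq_integral_Ioo, ← MeasureTheory.integral_Ioc_eq_integral_Ioo,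
    ← intervalIntegral.integral_of_le zero_le_one]
  have hd : deriv g = g' := funext fun s => (hg s).deriv
  rw [← hd]
  rw [intervalIntegral.integral_deriv_eq_sub (fun x _ => (hg x).differentiableAt)
    (by rw [hd]; exact hc.intervalIntegrable 0 1)]
  rw [hper, sub_self]

theorem integral_pdx2_zero {f : ℝ × ℝ → ℝ} (hf : ContDiff ℝ (⊤ : ℕ∞) f)
    (hper : ∀ x : ℝ × ℝ, f (x + (0,1)) = f x) :
    ∫ x in fundSq, pdx (0,1) f x = 0 := by
  have hc : Continuous (pdx (0,1) f) := (contDiff_fd hf _).continuous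
  have hint : IntegrableOn (pdx (0,1) f) fundSq volume := integrableOn_fundSq hc
  rw [show fundSq = Ico (0:ℝ) 1 ×ˢ Ico (0:ℝ) 1 from rfl] at hint ⊢
  rw [Measure.volume_eq_prod] at hint ⊢
  rw [MeasureTheory.setIntegral_prod _ hint]
  have inner : ∀ a : ℝ, ∫ b in Ico (0:ℝ) 1, pdx (0,1) f (a, b) = 0 := by
    intro a
    refine line_integral_zero (g := fun s => f (a, s)) (fun s => hasDerivAt_slice2 hf a s)
      (hc.comp (by continuity)) ?_
    have := hper (a, 0)
    simpa using this
  simp only [inner, integral_zero]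

theorem integral_pdx1_zero {f : ℝ × ℝ → ℝ} (hf : ContDiff ℝ (⊤ : ℕ∞) f)
    (hper : ∀ x : ℝ × ℝ, f (x + (1,0)) = f x) :
    ∫ x in fundSq, pdx (1,0) f x = 0 := by
  have hc : Continuous (pdx (1,0) f) := (contDiff_fd hf _).continuous
  have hint : IntegrableOn (pdx (1,0) f) fundSq volume := integrableOn_fundSq hc
  rw [show fundSq = Ico (0:ℝ) 1 ×ˢ Ico (0:ℝ) 1 from rfl] at hint ⊢
  rw [Measure.volume_eq_prod] at hint ⊢
  rw [MeasureTheory.setIntegral_prod _ hint]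
  have hswap : ∫ a in Ico (0:ℝ) 1, ∫ b in Ico (0:ℝ) 1, pdx (1,0) f (a, b)
      = ∫ b in Ico (0:ℝ) 1, ∫ a in Ico (0:ℝ) 1, pdx (1,0) f (a, b) := by
    apply MeasureTheory.integral_integral_swap
    rw [Measure.prod_restrict]
    exact hint
  rw [hswap]
  have inner : ∀ b : ℝ, ∫ a in Ico (0:ℝ) 1, pdx (1,0) f (a, b) = 0 := by
    intro b
    refine line_integral_zero (g := fun s => f (s, b)) (fun s => hasDerivAt_slice1 hf s b)
      (hc.comp (by continuity)) ?_
    have := hper (0, b)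
    simpa using this
  simp only [inner, integral_zero]

end Core

section DCT
open Set MeasureTheory

lemma measure_fundSq_lt_top : volume fundSq < ⊤ :=
  lt_of_le_of_lt (measure_mono (Set.prod_mono Set.Ico_subset_Icc_self Set.Ico_subset_Icc_self))
    (isCompact_Icc.prod isCompact_Icc).measure_lt_top

lemma measurableSet_fundSq : MeasurableSet fundSq :=
  (measurableSet_Ico).prod (measurableSet_Ico)

lemma isOpen_strip (tA tB : ℝ) : IsOpen {p : ℝ × ℝ × ℝ | p.2.2 ∈ Set.Ioo tA tB} :=
  isOpen_Ioo.preimage (continuous_snd.comp continuous_snd)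

lemma hasDerivAt_integral_fundSq {tA tB : ℝ} {f : ℝ × ℝ × ℝ → ℝ}
    (hf : ContDiffOn ℝ (⊤ : ℕ∞) f {p : ℝ × ℝ × ℝ | p.2.2 ∈ Set.Ioo tA tB}) {t : ℝ}
    (ht : t ∈ Set.Ioo tA tB) :
    HasDerivAt (fun τ => ∫ x in fundSq, f (x.1, x.2, τ))
      (∫ x in fundSq, pd et f (x.1, x.2, t)) t := by
  set Ω := {p : ℝ × ℝ × ℝ | p.2.2 ∈ Set.Ioo tA tB} with hΩdef
  have hΩ : IsOpen Ω := isOpen_strip tA tB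
  obtain ⟨δ, hδ0, hball⟩ := Metric.isOpen_iff.1 isOpen_Ioo t ht
  set δ' := δ / 2 with hδ'def
  have hδ'0 : 0 < δ' := by positivity
  have hIcc : Set.Icc (t - δ') (t + δ') ⊆ Set.Ioo tA tB := by
    refine subset_trans ?_ hball
    rw [← Real.closedBall_eq_Icc]
    exact Metric.closedBall_subset_ball (by simp [hδ'def]; linarith)
  have hball' : Metric.ball t δ' ⊆ Set.Ioo tA tB :=
    subset_trans (Metric.ball_subset_ball (by linarith)) hball
  have hmem : ∀ τ ∈ Set.Ioo tA tB, ∀ x : ℝ × ℝ, (x.1, x.2, τ) ∈ Ω := fun τ hτ x => hτ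
  -- continuity of pd et f on Ω
  have hpdf : ContDiffOn ℝ (⊤ : ℕ∞) (pd et f) Ω := contDiffOn_fd hf hΩ et
  -- the compact bound
  have hK : IsCompact ((Set.Icc (0:ℝ) 1 ×ˢ Set.Icc (0:ℝ) 1) ×ˢ Set.Icc (t - δ') (t + δ')) :=
    (isCompact_Icc.prod isCompact_Icc).prod isCompact_Icc
  have hφcont : ContinuousOn (fun z : (ℝ × ℝ) × ℝ => pd et f (z.1.1, z.1.2, z.2))
      ((Set.Icc (0:ℝ) 1 ×ˢ Set.Icc (0:ℝ) 1) ×ˢ Set.Icc (t - δ') (t + δ')) := by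
    have hψ : Continuous (fun z : (ℝ × ℝ) × ℝ => (z.1.1, z.1.2, z.2)) := by fun_prop
    refine (hpdf.continuousOn).comp hψ.continuousOn ?_
    intro z hz
    exact hIcc hz.2
  obtain ⟨C, hC⟩ := hK.exists_bound_of_continuousOn hφcont
  have key := hasDerivAt_integral_of_dominated_loc_of_deriv_le (μ := volume.restrict fundSq)
    (F := fun τ (x : ℝ × ℝ) => f (x.1, x.2, τ))
    (F' := fun τ (x : ℝ × ℝ) => pd et f (x.1, x.2, τ))
    (x₀ := t) (bound := fun _ => C) (Metric.ball_mem_nhds t hδ'0)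
    ?_ ?_ ?_ ?_ ?_ ?_
  · exact key.2
  · -- hF_meas
    filter_upwards [isOpen_Ioo.mem_nhds ht] with τ hτ
    exact ((contDiff_slice hf (hmem τ hτ)).continuous).aestronglyMeasurable
  · exact integrableOn_fundSq ((contDiff_slice hf (hmem t ht)).continuous)
  · exact ((contDiff_slice hpdf (hmem t ht)).continuous).aestronglyMeasurable
  · -- bound
    refine (MeasureTheory.ae_restrict_iff' measurableSet_fundSq).2 (Filter.Eventually.of_forall ?_)
    intro x hx τ hτ
    have hxIcc : x ∈ Set.Icc (0:ℝ) 1 ×ˢ Set.Icc (0:ℝ) 1 :=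
      (Set.prod_mono Set.Ico_subset_Icc_self Set.Ico_subset_Icc_self) hx
    have hτIcc : τ ∈ Set.Icc (t - δ') (t + δ') := by
      rw [← Real.closedBall_eq_Icc]
      exact Metric.ball_subset_closedBall hτ
    exact hC (x, τ) ⟨hxIcc, hτIcc⟩
  · exact integrableOn_const measure_fundSq_lt_top.ne
  · -- differentiability
    refine Filter.Eventually.of_forall ?_
    intro x τ hτ
    exact hasDerivAt_tslice (diffAt_of_contDiffOn hf hΩ (hmem τ (hball' hτ) x))

end DCT

section Pointwise
open Set Complex

variable {X : Type*} [NormedAddCommGroup X] [NormedSpace ℝ X]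

lemma fd_add' {f g : X → ℝ} {x v : X} (hf : DifferentiableAt ℝ f x)
    (hg : DifferentiableAt ℝ g x) :
    fderiv ℝ (fun q => f q + g q) x v = fderiv ℝ f x v + fderiv ℝ g x v := by
  rw [fderiv_fun_add hf hg]; rfl

lemma fd_sub' {f g : X → ℝ} {x v : X} (hf : DifferentiableAt ℝ f x)
    (hg : DifferentiableAt ℝ g x) :
    fderiv ℝ (fun q => f q - g q) x v = fderiv ℝ f x v - fderiv ℝ g x v := by
  rw [fderiv_fun_sub hf hg]; rfl

lemma fd_cmul {f : X → ℝ} {x v : X} (hf : DifferentiableAt ℝ f x) (c : ℝ) :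
    fderiv ℝ (fun q => c * f q) x v = c * fderiv ℝ f x v := by
  rw [fderiv_const_mul hf c]; rfl

lemma fd_sub_const' {f : X → ℝ} {x v : X} (c : ℝ) :
    fderiv ℝ (fun q => f q - c) x v = fderiv ℝ f x v := by
  rw [fderiv_sub_const c]

lemma diffAt_rdot {F G : X → ℂ} {x : X} (hF : DifferentiableAt ℝ F x)
    (hG : DifferentiableAt ℝ G x) :
    DifferentiableAt ℝ (fun q => rdot (F q) (G q)) x := by
  have : (fun q => rdot (F q) (G q))
      = fun q => (F q).re * (G q).re + (F q).im * (G q).im := funext fun q => rdot_eq _ _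
  rw [this]
  exact ((diff_re hF).mul (diff_re hG)).add ((diff_im hF).mul (diff_im hG))

lemma contDiffOn_rdot {F G : X → ℂ} {s : Set X} (hF : ContDiffOn ℝ (⊤ : ℕ∞) F s)
    (hG : ContDiffOn ℝ (⊤ : ℕ∞) G s) :
    ContDiffOn ℝ (⊤ : ℕ∞) (fun q => rdot (F q) (G q)) s := by
  have : (fun q => rdot (F q) (G q))
      = fun q => (F q).re * (G q).re + (F q).im * (G q).im := funext fun q => rdot_eq _ _
  rw [this]
  exact ((Complex.reCLM.contDiff.comp_contDiffOn hF).mul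
      (Complex.reCLM.contDiff.comp_contDiffOn hG)).add
    ((Complex.imCLM.contDiff.comp_contDiffOn hF).mul
      (Complex.imCLM.contDiff.comp_contDiffOn hG))

lemma contDiffOn_crossR {F G : X → ℂ} {s : Set X} (hF : ContDiffOn ℝ (⊤ : ℕ∞) F s)
    (hG : ContDiffOn ℝ (⊤ : ℕ∞) G s) :
    ContDiffOn ℝ (⊤ : ℕ∞) (fun q => crossR (F q) (G q)) s := by
  have : (fun q => crossR (F q) (G q))
      = fun q => (F q).re * (G q).im - (F q).im * (G q).re := rfl
  rw [this]
  exact ((Complex.reCLM.contDiff.comp_contDiffOn hF).mul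
      (Complex.imCLM.contDiff.comp_contDiffOn hG)).sub
    ((Complex.imCLM.contDiff.comp_contDiffOn hF).mul
      (Complex.reCLM.contDiff.comp_contDiffOn hG))

-- pd-level wrappers
section PDW
variable {f g : ℝ × ℝ × ℝ → ℝ} {F G : ℝ × ℝ × ℝ → ℂ} {p v : ℝ × ℝ × ℝ}

lemma pd_mul (hf : DifferentiableAt ℝ f p) (hg : DifferentiableAt ℝ g p) :
    pd v (fun q => f q * g q) p = pd v f p * g p + f p * pd v g p := fd_mul hf hg

lemma pd_add (hf : DifferentiableAt ℝ f p) (hg : DifferentiableAt ℝ g p) :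
    pd v (fun q => f q + g q) p = pd v f p + pd v g p := fd_add' hf hg

lemma pd_cmul (hf : DifferentiableAt ℝ f p) (c : ℝ) :
    pd v (fun q => c * f q) p = c * pd v f p := fd_cmul hf c

lemma pd_sub_const (c : ℝ) : pd v (fun q => f q - c) p = pd v f p := fd_sub_const' c

lemma pd_rdot (hF : DifferentiableAt ℝ F p) (hG : DifferentiableAt ℝ G p) :
    pd v (fun q => rdot (F q) (G q)) p
      = rdot (pd v F p) (G p) + rdot (F p) (pd v G p) := fd_rdot hF hG

lemma pd_crossR (hF : DifferentiableAt ℝ F p) (hG : DifferentiableAt ℝ G p) :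
    pd v (fun q => crossR (F q) (G q)) p
      = crossR (pd v F p) (G p) + crossR (F p) (pd v G p) := fd_crossR hF hG

end PDW

section PDXW
variable {f g : ℝ × ℝ → ℝ} {x v : ℝ × ℝ}

lemma pdx_mul (hf : DifferentiableAt ℝ f x) (hg : DifferentiableAt ℝ g x) :
    pdx v (fun y => f y * g y) x = pdx v f x * g x + f x * pdx v g x := fd_mul hf hg

lemma pdx_add (hf : DifferentiableAt ℝ f x) (hg : DifferentiableAt ℝ g x) :
    pdx v (fun y => f y + g y) x = pdx v f x + pdx v g x := fd_add' hf hg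

lemma pdx_sub (hf : DifferentiableAt ℝ f x) (hg : DifferentiableAt ℝ g x) :
    pdx v (fun y => f y - g y) x = pdx v f x - pdx v g x := fd_sub' hf hg

end PDXW

/-- auxiliary potential `W = (1/(4ε²))(|u|²-1)²` -/
def Wfun (ε : ℝ) (u : ℝ × ℝ × ℝ → ℂ) : ℝ × ℝ × ℝ → ℝ :=
  fun q => (1 / (4 * ε ^ 2)) * ((rdot (u q) (u q) - 1) * (rdot (u q) (u q) - 1))

/-- auxiliary density `Φ = ½|Du|² + W` -/
def Phif (ε : ℝ) (u : ℝ × ℝ × ℝ → ℂ) : ℝ × ℝ × ℝ → ℝ :=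
  fun q => (1 / 2) * (rdot (pd e1 u q) (pd e1 u q) + rdot (pd e2 u q) (pd e2 u q))
    + Wfun ε u q

section P
variable {s : Set (ℝ × ℝ × ℝ)} {u : ℝ × ℝ × ℝ → ℂ} {p : ℝ × ℝ × ℝ} {ε : ℝ}

lemma contDiffOn_pd (hu : ContDiffOn ℝ (⊤ : ℕ∞) u s) (hs : IsOpen s) (v : ℝ × ℝ × ℝ) :
    ContDiffOn ℝ (⊤ : ℕ∞) (pd v u) s := contDiffOn_fd hu hs v

lemma diffAt_pd (hu : ContDiffOn ℝ (⊤ : ℕ∞) u s) (hs : IsOpen s) (hp : p ∈ s) (v : ℝ × ℝ × ℝ) :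
    DifferentiableAt ℝ (pd v u) p :=
  diffAt_of_contDiffOn (contDiffOn_pd hu hs v) hs hp

lemma pd_comm (hu : ContDiffOn ℝ (⊤ : ℕ∞) u s) (hs : IsOpen s) (hp : p ∈ s) (v w : ℝ × ℝ × ℝ) :
    pd v (pd w u) p = pd w (pd v u) p :=
  fd_apply_comm hu hs hp v w

/-- P1: time derivative of the Jacobian as a spatial divergence -/
lemma pd_et_Jdet (hu : ContDiffOn ℝ (⊤ : ℕ∞) u s) (hs : IsOpen s) (hp : p ∈ s) :
    pd et (fun q => Jdet u q) p
      = pd e1 (fun q => crossR (pd et u q) (pd e2 u q)) p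
        + pd e2 (fun q => crossR (pd e1 u q) (pd et u q)) p := by
  have d1 := diffAt_pd hu hs hp e1
  have d2 := diffAt_pd hu hs hp e2
  have dt := diffAt_pd hu hs hp et
  have hJ : (fun q => Jdet u q) = fun q => crossR (pd e1 u q) (pd e2 u q) := rfl
  rw [hJ, pd_crossR d1 d2, pd_crossR dt d2, pd_crossR d1 dt,
    pd_comm hu hs hp et e1, pd_comm hu hs hp et e2,
    pd_comm hu hs hp e2 e1, pd_comm hu hs hp e1 et]
  simp only [crossR]
  ring

/-- P2: the GLS equation turns the time-space cross terms into space derivatives -/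
lemma crossR_et (hu : ContDiffOn ℝ (⊤ : ℕ∞) u s) (hs : IsOpen s) (hp : p ∈ s)
    (hε : ε ≠ 0) (heqp : GLSeq ε u p) (v : ℝ × ℝ × ℝ) :
    crossR (pd et u p) (pd v u p)
      = rdot (lap u p) (pd v u p) - pd v (Wfun ε u) p := by
  have du := diffAt_of_contDiffOn hu hs hp
  have dv := diffAt_pd hu hs hp v
  -- the PDE
  have hI : Complex.I * pd et u p
      = lap u p - ((ε : ℂ) ^ 2)⁻¹ * (((‖u p‖ : ℝ) : ℂ) ^ 2 - 1) * u p := by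
    have := heqp
    unfold GLSeq at this
    linear_combination this
  have hcast : ((ε : ℂ) ^ 2)⁻¹ * (((‖u p‖ : ℝ) : ℂ) ^ 2 - 1) * u p
      = ((((ε ^ 2)⁻¹ * (‖u p‖ ^ 2 - 1)) : ℝ) : ℂ) * u p := by push_cast; ring
  have h1 : crossR (pd et u p) (pd v u p) = rdot (Complex.I * pd et u p) (pd v u p) :=
    crossR_eq_rdot _ _
  rw [h1, hI, rdot_sub_left, hcast, rdot_real_mul]
  -- now compute pd v (Wfun ε u) p
  have dN : DifferentiableAt ℝ (fun q => rdot (u q) (u q)) p := diffAt_rdot du du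
  have dN1 : DifferentiableAt ℝ (fun q => rdot (u q) (u q) - 1) p := dN.sub_const 1
  have hW : pd v (Wfun ε u) p
      = (1 / (4 * ε ^ 2)) * (2 * (rdot (u p) (u p) - 1) * (2 * rdot (u p) (pd v u p))) := by
    unfold Wfun
    rw [pd_cmul (dN1.fun_mul dN1), pd_mul dN1 dN1, pd_sub_const, pd_rdot du du]
    rw [rdot_comm (pd v u p) (u p)]
    ring
  rw [hW]
  have hN : rdot (u p) (u p) = ‖u p‖ ^ 2 := rdot_self _
  rw [hN]
  field_simp
  ring

/-- P3: the Laplacian term as a spatial divergence -/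
lemma rdot_lap (hu : ContDiffOn ℝ (⊤ : ℕ∞) u s) (hs : IsOpen s) (hp : p ∈ s)
    {ε : ℝ} (hε : ε ≠ 0) (heqp : GLSeq ε u p) (v : ℝ × ℝ × ℝ) :
    crossR (pd et u p) (pd v u p)
      = pd e1 (fun q => rdot (pd e1 u q) (pd v u q)) p
        + pd e2 (fun q => rdot (pd e2 u q) (pd v u q)) p
        - pd v (Phif ε u) p := by
  have d1 := diffAt_pd hu hs hp e1
  have d2 := diffAt_pd hu hs hp e2
  have dv := diffAt_pd hu hs hp v
  have du := diffAt_of_contDiffOn hu hs hp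
  have dN : DifferentiableAt ℝ (fun q => rdot (u q) (u q)) p :=
    diffAt_rdot du du
  have dW : DifferentiableAt ℝ (Wfun ε u) p := by
    unfold Wfun
    exact ((dN.sub_const 1).mul (dN.sub_const 1)).const_mul _
  have dS : DifferentiableAt ℝ
      (fun q => rdot (pd e1 u q) (pd e1 u q) + rdot (pd e2 u q) (pd e2 u q)) p :=
    (diffAt_rdot d1 d1).add (diffAt_rdot d2 d2)
  have hPhi : pd v (Phif ε u) p
      = (1 / 2) * (pd v (fun q => rdot (pd e1 u q) (pd e1 u q)) p
          + pd v (fun q => rdot (pd e2 u q) (pd e2 u q)) p)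
        + pd v (Wfun ε u) p := by
    unfold Phif
    rw [pd_add (dS.const_mul _) dW, pd_cmul dS,
      pd_add (diffAt_rdot d1 d1) (diffAt_rdot d2 d2)]
  rw [crossR_et hu hs hp hε heqp v, hPhi]
  -- expand the lap term and the divergence terms
  have hlap : rdot (lap u p) (pd v u p)
      = rdot (pd e1 (pd e1 u) p) (pd v u p) + rdot (pd e2 (pd e2 u) p) (pd v u p) := by
    unfold lap
    rw [rdot_add_left]
  rw [hlap, pd_rdot d1 dv, pd_rdot d2 dv, pd_rdot d1 d1, pd_rdot d2 d2,
    pd_comm hu hs hp e1 v, pd_comm hu hs hp e2 v]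
  have r1 : rdot (pd v (pd e1 u) p) (pd e1 u p) = rdot (pd e1 u p) (pd v (pd e1 u) p) :=
    rdot_comm _ _
  have r2 : rdot (pd v (pd e2 u) p) (pd e2 u p) = rdot (pd e2 u p) (pd v (pd e2 u) p) :=
    rdot_comm _ _
  rw [r1, r2]
  ring

end P
end Pointwise

/-- if `u` is a smooth spatially ℤ²-periodic solution of GLS on `ℝ² × I`
(`I` an open interval), then for every smooth ℤ²-periodic `η : ℝ² → ℝ`,
`(d/dt) ∫_{[0,1)²} η · det Du dx = ∫_{[0,1)²} Σ_{j,k,l} (∂_{xⱼ}∂_{x_l}η) 𝕁_{jk} (∂_{x_k}u · ∂_{x_l}u) dx`. -/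
theorem weak_jacobian_evolution
    (ε tA tB : ℝ) (hε : 0 < ε) (u : ℝ × ℝ × ℝ → ℂ)
    (hu : ContDiffOn ℝ (⊤ : ℕ∞) u {p : ℝ × ℝ × ℝ | p.2.2 ∈ Set.Ioo tA tB})
    (hper : SpacePeriodic u)
    (heq : ∀ p : ℝ × ℝ × ℝ, p.2.2 ∈ Set.Ioo tA tB → GLSeq ε u p)
    (η : ℝ × ℝ → ℝ) (hη : ContDiff ℝ (⊤ : ℕ∞) η)
    (hηper : ∀ x : ℝ × ℝ, η (x + (1, 0)) = η x ∧ η (x + (0, 1)) = η x)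
    (t : ℝ) (ht : t ∈ Set.Ioo tA tB) :
    deriv (fun τ => ∫ x in fundSq, η x * Jdet u (x.1, x.2, τ)) t
      = ∫ x in fundSq, ∑ j : Fin 2, ∑ k : Fin 2, ∑ l : Fin 2,
          pdx (dir2 j) (fun y => pdx (dir2 l) η y) x * Jmat j k *
            rdot (pd (dir k) u (x.1, x.2, t)) (pd (dir l) u (x.1, x.2, t)) := by
  have hεne : ε ≠ 0 := ne_of_gt hε
  set Ω : Set (ℝ × ℝ × ℝ) := {p : ℝ × ℝ × ℝ | p.2.2 ∈ Set.Ioo tA tB} with hΩdef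
  have hΩ : IsOpen Ω := isOpen_strip tA tB
  have hmem : ∀ x : ℝ × ℝ, (x.1, x.2, t) ∈ Ω := fun _ => ht
  -- smoothness of the building blocks on Ω
  have hU1 : ContDiffOn ℝ (⊤ : ℕ∞) (pd e1 u) Ω := contDiffOn_pd hu hΩ e1
  have hU2 : ContDiffOn ℝ (⊤ : ℕ∞) (pd e2 u) Ω := contDiffOn_pd hu hΩ e2
  have hUt : ContDiffOn ℝ (⊤ : ℕ∞) (pd et u) Ω := contDiffOn_pd hu hΩ et
  have hJD : ContDiffOn ℝ (⊤ : ℕ∞) (fun q => Jdet u q) Ω := contDiffOn_crossR hU1 hU2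
  have hA : ContDiffOn ℝ (⊤ : ℕ∞) (fun q => crossR (pd et u q) (pd e2 u q)) Ω :=
    contDiffOn_crossR hUt hU2
  have hB : ContDiffOn ℝ (⊤ : ℕ∞) (fun q => crossR (pd e1 u q) (pd et u q)) Ω :=
    contDiffOn_crossR hU1 hUt
  have hR11 : ContDiffOn ℝ (⊤ : ℕ∞) (fun q => rdot (pd e1 u q) (pd e1 u q)) Ω :=
    contDiffOn_rdot hU1 hU1
  have hR12 : ContDiffOn ℝ (⊤ : ℕ∞) (fun q => rdot (pd e1 u q) (pd e2 u q)) Ω :=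
    contDiffOn_rdot hU1 hU2
  have hR21 : ContDiffOn ℝ (⊤ : ℕ∞) (fun q => rdot (pd e2 u q) (pd e1 u q)) Ω :=
    contDiffOn_rdot hU2 hU1
  have hR22 : ContDiffOn ℝ (⊤ : ℕ∞) (fun q => rdot (pd e2 u q) (pd e2 u q)) Ω :=
    contDiffOn_rdot hU2 hU2
  have hN : ContDiffOn ℝ (⊤ : ℕ∞) (fun q => rdot (u q) (u q)) Ω := contDiffOn_rdot hu hu
  have hW : ContDiffOn ℝ (⊤ : ℕ∞) (Wfun ε u) Ω := by
    unfold Wfun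
    exact contDiffOn_const.mul
      ((hN.sub contDiffOn_const).mul (hN.sub contDiffOn_const))
  have hPhi : ContDiffOn ℝ (⊤ : ℕ∞) (Phif ε u) Ω := by
    unfold Phif
    exact (contDiffOn_const.mul (hR11.add hR22)).add hW
  -- η and its derivatives
  have hη1 : ContDiff ℝ (⊤ : ℕ∞) (pdx ((1:ℝ), (0:ℝ)) η) := contDiff_fd hη _
  have hη2 : ContDiff ℝ (⊤ : ℕ∞) (pdx ((0:ℝ), (1:ℝ)) η) := contDiff_fd hη _
  -- periodicity of pd v u on Ω
  have h22e1 : ∀ p : ℝ × ℝ × ℝ, (p + e1).2.2 = p.2.2 := by intro p; simp [e1]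
  have h22e2 : ∀ p : ℝ × ℝ × ℝ, (p + e2).2.2 = p.2.2 := by intro p; simp [e2]
  have hshift1 : ∀ p : ℝ × ℝ × ℝ, p ∈ Ω → p + e1 ∈ Ω := by
    intro p hp
    show (p + e1).2.2 ∈ Set.Ioo tA tB
    rw [h22e1]; exact hp
  have hshift2 : ∀ p : ℝ × ℝ × ℝ, p ∈ Ω → p + e2 ∈ Ω := by
    intro p hp
    show (p + e2).2.2 ∈ Set.Ioo tA tB
    rw [h22e2]; exact hp
  have hpdu1 : ∀ (v : ℝ × ℝ × ℝ), ∀ p ∈ Ω, pd v u (p + e1) = pd v u p := by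
    intro v p hp
    unfold pd
    rw [fd_shift hΩ (fun q _ => (hper q).1)
      (diffAt_of_contDiffOn hu hΩ (hshift1 p hp)) hp]
  have hpdu2 : ∀ (v : ℝ × ℝ × ℝ), ∀ p ∈ Ω, pd v u (p + e2) = pd v u p := by
    intro v p hp
    unfold pd
    rw [fd_shift hΩ (fun q _ => (hper q).2)
      (diffAt_of_contDiffOn hu hΩ (hshift2 p hp)) hp]
  -- periodicity of the first derivatives of η
  have hηd : ∀ (v c : ℝ × ℝ), (∀ z : ℝ × ℝ, η (z + c) = η z) →
      ∀ y : ℝ × ℝ, pdx v η (y + c) = pdx v η y := by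
    intro v c hc y
    unfold pdx
    rw [fd_shift isOpen_univ (fun q _ => hc q)
      ((hη.differentiable (by simp)) _) (Set.mem_univ y)]
  -- the G functions for the divergence part
  set G1 : ℝ × ℝ → ℝ := fun y =>
    η y * crossR (pd et u (y.1, y.2, t)) (pd e2 u (y.1, y.2, t))
    - pdx (1, 0) η y * rdot (pd e1 u (y.1, y.2, t)) (pd e2 u (y.1, y.2, t))
    + pdx (0, 1) η y * rdot (pd e1 u (y.1, y.2, t)) (pd e1 u (y.1, y.2, t))
    - pdx (0, 1) η y * Phif ε u (y.1, y.2, t) with hG1def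
  set G2 : ℝ × ℝ → ℝ := fun y =>
    η y * crossR (pd e1 u (y.1, y.2, t)) (pd et u (y.1, y.2, t))
    - pdx (1, 0) η y * rdot (pd e2 u (y.1, y.2, t)) (pd e2 u (y.1, y.2, t))
    + pdx (0, 1) η y * rdot (pd e2 u (y.1, y.2, t)) (pd e1 u (y.1, y.2, t))
    + pdx (1, 0) η y * Phif ε u (y.1, y.2, t) with hG2def
  set Rhs : ℝ × ℝ → ℝ := fun x =>
    pdx (1, 0) (pdx (1, 0) η) x * rdot (pd e1 u (x.1, x.2, t)) (pd e2 u (x.1, x.2, t))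
    + pdx (0, 1) (pdx (1, 0) η) x * rdot (pd e2 u (x.1, x.2, t)) (pd e2 u (x.1, x.2, t))
    - pdx (1, 0) (pdx (0, 1) η) x * rdot (pd e1 u (x.1, x.2, t)) (pd e1 u (x.1, x.2, t))
    - pdx (0, 1) (pdx (0, 1) η) x * rdot (pd e2 u (x.1, x.2, t)) (pd e1 u (x.1, x.2, t))
    with hRhsdef
  -- smoothness of G1 G2 Rhs as functions on ℝ²
  have hG1s : ContDiff ℝ (⊤ : ℕ∞) G1 := by
    rw [hG1def]
    exact (((hη.mul (contDiff_slice hA hmem)).sub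
      (hη1.mul (contDiff_slice hR12 hmem))).add
      (hη2.mul (contDiff_slice hR11 hmem))).sub
      (hη2.mul (contDiff_slice hPhi hmem))
  have hG2s : ContDiff ℝ (⊤ : ℕ∞) G2 := by
    rw [hG2def]
    exact (((hη.mul (contDiff_slice hB hmem)).sub
      (hη1.mul (contDiff_slice hR22 hmem))).add
      (hη2.mul (contDiff_slice hR21 hmem))).add
      (hη1.mul (contDiff_slice hPhi hmem))
  have hRhsc : Continuous Rhs := by
    rw [hRhsdef]
    exact (((((contDiff_fd hη1 ((1:ℝ),(0:ℝ))).continuous).mul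
        (contDiff_slice hR12 hmem).continuous).add
      (((contDiff_fd hη1 ((0:ℝ),(1:ℝ))).continuous).mul
        (contDiff_slice hR22 hmem).continuous)).sub
      (((contDiff_fd hη2 ((1:ℝ),(0:ℝ))).continuous).mul
        (contDiff_slice hR11 hmem).continuous)).sub
      (((contDiff_fd hη2 ((0:ℝ),(1:ℝ))).continuous).mul
        (contDiff_slice hR21 hmem).continuous)
  -- periodicity of G1 and G2
  have hcoord1 : ∀ y : ℝ × ℝ, ((y + ((1:ℝ), (0:ℝ))).1, (y + ((1:ℝ),(0:ℝ))).2, t)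
      = ((y.1, y.2, t) + e1) := by
    intro y; simp [e1, Prod.ext_iff]
  have hcoord2 : ∀ y : ℝ × ℝ, ((y + ((0:ℝ), (1:ℝ))).1, (y + ((0:ℝ),(1:ℝ))).2, t)
      = ((y.1, y.2, t) + e2) := by
    intro y; simp [e2, Prod.ext_iff]
  have hWper : ∀ p ∈ Ω, Wfun ε u (p + e1) = Wfun ε u p ∧ Wfun ε u (p + e2) = Wfun ε u p := by
    intro p _
    unfold Wfun
    rw [(hper p).1, (hper p).2]
    exact ⟨rfl, rfl⟩
  have hPhiper : ∀ p ∈ Ω, Phif ε u (p + e1) = Phif ε u p ∧ Phif ε u (p + e2) = Phif ε u p := by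
    intro p hp
    unfold Phif
    rw [hpdu1 e1 p hp, hpdu1 e2 p hp, hpdu2 e1 p hp, hpdu2 e2 p hp,
      (hWper p hp).1, (hWper p hp).2]
    exact ⟨rfl, rfl⟩
  have hG1per : ∀ y : ℝ × ℝ, G1 (y + (1, 0)) = G1 y := by
    intro y
    rw [hG1def]
    simp only
    rw [hcoord1 y, hηper y |>.1, hηd (1,0) (1,0) (fun z => (hηper z).1) y,
      hηd (0,1) (1,0) (fun z => (hηper z).1) y,
      hpdu1 et _ (hmem y), hpdu1 e1 _ (hmem y), hpdu1 e2 _ (hmem y),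
      (hPhiper _ (hmem y)).1]
  have hG2per : ∀ y : ℝ × ℝ, G2 (y + (1, 0)) = G2 y := by
    intro y
    rw [hG2def]
    simp only
    rw [hcoord1 y, hηper y |>.1, hηd (1,0) (1,0) (fun z => (hηper z).1) y,
      hηd (0,1) (1,0) (fun z => (hηper z).1) y,
      hpdu1 et _ (hmem y), hpdu1 e1 _ (hmem y), hpdu1 e2 _ (hmem y),
      (hPhiper _ (hmem y)).1]
  have hG1per2 : ∀ y : ℝ × ℝ, G1 (y + (0, 1)) = G1 y := by
    intro y
    rw [hG1def]
    simp only
    rw [hcoord2 y, hηper y |>.2, hηd (1,0) (0,1) (fun z => (hηper z).2) y,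
      hηd (0,1) (0,1) (fun z => (hηper z).2) y,
      hpdu2 et _ (hmem y), hpdu2 e1 _ (hmem y), hpdu2 e2 _ (hmem y),
      (hPhiper _ (hmem y)).2]
  have hG2per2 : ∀ y : ℝ × ℝ, G2 (y + (0, 1)) = G2 y := by
    intro y
    rw [hG2def]
    simp only
    rw [hcoord2 y, hηper y |>.2, hηd (1,0) (0,1) (fun z => (hηper z).2) y,
      hηd (0,1) (0,1) (fun z => (hηper z).2) y,
      hpdu2 et _ (hmem y), hpdu2 e1 _ (hmem y), hpdu2 e2 _ (hmem y),
      (hPhiper _ (hmem y)).2]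
  -- differentiation under the integral sign
  have hηc : ContDiff ℝ (⊤ : ℕ∞) (fun q : ℝ × ℝ × ℝ => η (q.1, q.2.1)) :=
    hη.comp (contDiff_fst.prodMk (contDiff_fst.comp contDiff_snd))
  have hFη : ContDiffOn ℝ (⊤ : ℕ∞) (fun p : ℝ × ℝ × ℝ => η (p.1, p.2.1) * Jdet u p) Ω :=
    (hηc.contDiffOn).mul hJD
  have hDI := hasDerivAt_integral_fundSq
    (f := fun p : ℝ × ℝ × ℝ => η (p.1, p.2.1) * Jdet u p) hFη ht
  have hderiv : deriv (fun τ => ∫ x in fundSq, η x * Jdet u (x.1, x.2, τ)) t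
      = ∫ x in fundSq, pd et (fun p : ℝ × ℝ × ℝ => η (p.1, p.2.1) * Jdet u p) (x.1, x.2, t) :=
    hDI.deriv
  rw [hderiv]
  -- THE KEY pointwise identity
  have KEY : ∀ x : ℝ × ℝ,
      pd et (fun p : ℝ × ℝ × ℝ => η (p.1, p.2.1) * Jdet u p) (x.1, x.2, t)
        = pdx (1, 0) G1 x + pdx (0, 1) G2 x + Rhs x := by
    intro x
    have hp : (x.1, x.2, t) ∈ Ω := hmem x
    have heqp : GLSeq ε u (x.1, x.2, t) := heq (x.1, x.2, t) ht
    -- differentiability of everything in sight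
    have dJD : DifferentiableAt ℝ (fun q => Jdet u q) (x.1, x.2, t) :=
      diffAt_of_contDiffOn hJD hΩ hp
    have dηc : DifferentiableAt ℝ (fun q : ℝ × ℝ × ℝ => η (q.1, q.2.1)) (x.1, x.2, t) :=
      hηc.differentiable (by simp) _
    have dA : DifferentiableAt ℝ (fun q => crossR (pd et u q) (pd e2 u q)) (x.1, x.2, t) :=
      diffAt_of_contDiffOn hA hΩ hp
    have dB : DifferentiableAt ℝ (fun q => crossR (pd e1 u q) (pd et u q)) (x.1, x.2, t) :=
      diffAt_of_contDiffOn hB hΩ hp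
    have dR11 : DifferentiableAt ℝ (fun q => rdot (pd e1 u q) (pd e1 u q)) (x.1, x.2, t) :=
      diffAt_of_contDiffOn hR11 hΩ hp
    have dR12 : DifferentiableAt ℝ (fun q => rdot (pd e1 u q) (pd e2 u q)) (x.1, x.2, t) :=
      diffAt_of_contDiffOn hR12 hΩ hp
    have dR21 : DifferentiableAt ℝ (fun q => rdot (pd e2 u q) (pd e1 u q)) (x.1, x.2, t) :=
      diffAt_of_contDiffOn hR21 hΩ hp
    have dR22 : DifferentiableAt ℝ (fun q => rdot (pd e2 u q) (pd e2 u q)) (x.1, x.2, t) :=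
      diffAt_of_contDiffOn hR22 hΩ hp
    have dPhi : DifferentiableAt ℝ (Phif ε u) (x.1, x.2, t) :=
      diffAt_of_contDiffOn hPhi hΩ hp
    have dη : DifferentiableAt ℝ η x := hη.differentiable (by simp) x
    have dη1 : DifferentiableAt ℝ (pdx (1, 0) η) x := hη1.differentiable (by simp) x
    have dη2 : DifferentiableAt ℝ (pdx (0, 1) η) x := hη2.differentiable (by simp) x
    have dA' : DifferentiableAt ℝ
        (fun y : ℝ × ℝ => crossR (pd et u (y.1, y.2, t)) (pd e2 u (y.1, y.2, t))) x :=
      (contDiff_slice hA hmem).differentiable (by simp) x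
    have dB' : DifferentiableAt ℝ
        (fun y : ℝ × ℝ => crossR (pd e1 u (y.1, y.2, t)) (pd et u (y.1, y.2, t))) x :=
      (contDiff_slice hB hmem).differentiable (by simp) x
    have dR11' : DifferentiableAt ℝ
        (fun y : ℝ × ℝ => rdot (pd e1 u (y.1, y.2, t)) (pd e1 u (y.1, y.2, t))) x :=
      (contDiff_slice hR11 hmem).differentiable (by simp) x
    have dR12' : DifferentiableAt ℝ
        (fun y : ℝ × ℝ => rdot (pd e1 u (y.1, y.2, t)) (pd e2 u (y.1, y.2, t))) x :=
      (contDiff_slice hR12 hmem).differentiable (by simp) x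
    have dR21' : DifferentiableAt ℝ
        (fun y : ℝ × ℝ => rdot (pd e2 u (y.1, y.2, t)) (pd e1 u (y.1, y.2, t))) x :=
      (contDiff_slice hR21 hmem).differentiable (by simp) x
    have dR22' : DifferentiableAt ℝ
        (fun y : ℝ × ℝ => rdot (pd e2 u (y.1, y.2, t)) (pd e2 u (y.1, y.2, t))) x :=
      (contDiff_slice hR22 hmem).differentiable (by simp) x
    have dPhi' : DifferentiableAt ℝ (fun y : ℝ × ℝ => Phif ε u (y.1, y.2, t)) x :=
      (contDiff_slice hPhi hmem).differentiable (by simp) x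
    -- expand the left-hand side
    have hL : pd et (fun p : ℝ × ℝ × ℝ => η (p.1, p.2.1) * Jdet u p) (x.1, x.2, t)
        = pd et (fun q : ℝ × ℝ × ℝ => η (q.1, q.2.1)) (x.1, x.2, t) * Jdet u (x.1, x.2, t)
          + η x * pd et (fun q => Jdet u q) (x.1, x.2, t) :=
      pd_mul (f := fun q : ℝ × ℝ × ℝ => η (q.1, q.2.1)) (g := fun q => Jdet u q) dηc dJD
    have hze : pd et (fun q : ℝ × ℝ × ℝ => η (q.1, q.2.1)) (x.1, x.2, t) = 0 := by
      have hLmap : HasFDerivAt (fun r : ℝ × ℝ × ℝ => ((r.1 : ℝ), (r.2.1 : ℝ)))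
          ((ContinuousLinearMap.fst ℝ ℝ (ℝ × ℝ)).prod
            ((ContinuousLinearMap.fst ℝ ℝ ℝ).comp (ContinuousLinearMap.snd ℝ ℝ (ℝ × ℝ))))
          (x.1, x.2, t) :=
        (hasFDerivAt_fst).prodMk (hasFDerivAt_fst.comp _ hasFDerivAt_snd)
      have h := ((hη.differentiable (by simp) _).hasFDerivAt.comp (x.1, x.2, t) hLmap).fderiv
      show fderiv ℝ (fun q : ℝ × ℝ × ℝ => η (q.1, q.2.1)) (x.1, x.2, t) et = 0
      rw [show (fun q : ℝ × ℝ × ℝ => η (q.1, q.2.1))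
        = η ∘ (fun r : ℝ × ℝ × ℝ => (r.1, r.2.1)) from rfl, h]
      exact (fderiv ℝ η (x.1, x.2)).map_zero
    -- expand G1
    have eA : pdx (1, 0)
        (fun y : ℝ × ℝ => crossR (pd et u (y.1, y.2, t)) (pd e2 u (y.1, y.2, t))) x
        = pd e1 (fun q => crossR (pd et u q) (pd e2 u q)) (x.1, x.2, t) := pdx_slice1 dA
    have eR12 : pdx (1, 0)
        (fun y : ℝ × ℝ => rdot (pd e1 u (y.1, y.2, t)) (pd e2 u (y.1, y.2, t))) x
        = pd e1 (fun q => rdot (pd e1 u q) (pd e2 u q)) (x.1, x.2, t) := pdx_slice1 dR12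
    have eR11 : pdx (1, 0)
        (fun y : ℝ × ℝ => rdot (pd e1 u (y.1, y.2, t)) (pd e1 u (y.1, y.2, t))) x
        = pd e1 (fun q => rdot (pd e1 u q) (pd e1 u q)) (x.1, x.2, t) := pdx_slice1 dR11
    have ePhi1 : pdx (1, 0) (fun y : ℝ × ℝ => Phif ε u (y.1, y.2, t)) x
        = pd e1 (Phif ε u) (x.1, x.2, t) := pdx_slice1 dPhi
    have eB : pdx (0, 1)
        (fun y : ℝ × ℝ => crossR (pd e1 u (y.1, y.2, t)) (pd et u (y.1, y.2, t))) x
        = pd e2 (fun q => crossR (pd e1 u q) (pd et u q)) (x.1, x.2, t) := pdx_slice2 dB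
    have eR22 : pdx (0, 1)
        (fun y : ℝ × ℝ => rdot (pd e2 u (y.1, y.2, t)) (pd e2 u (y.1, y.2, t))) x
        = pd e2 (fun q => rdot (pd e2 u q) (pd e2 u q)) (x.1, x.2, t) := pdx_slice2 dR22
    have eR21 : pdx (0, 1)
        (fun y : ℝ × ℝ => rdot (pd e2 u (y.1, y.2, t)) (pd e1 u (y.1, y.2, t))) x
        = pd e2 (fun q => rdot (pd e2 u q) (pd e1 u q)) (x.1, x.2, t) := pdx_slice2 dR21
    have ePhi2 : pdx (0, 1) (fun y : ℝ × ℝ => Phif ε u (y.1, y.2, t)) x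
        = pd e2 (Phif ε u) (x.1, x.2, t) := pdx_slice2 dPhi
    have hG1x : pdx (1, 0) G1 x
        = (pdx (1, 0) η x
            * crossR (pd et u (x.1, x.2, t)) (pd e2 u (x.1, x.2, t))
          + η x * pd e1 (fun q => crossR (pd et u q) (pd e2 u q)) (x.1, x.2, t))
        - (pdx (1, 0) (pdx (1, 0) η) x
            * rdot (pd e1 u (x.1, x.2, t)) (pd e2 u (x.1, x.2, t))
          + pdx (1, 0) η x
            * pd e1 (fun q => rdot (pd e1 u q) (pd e2 u q)) (x.1, x.2, t))
        + (pdx (1, 0) (pdx (0, 1) η) x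
            * rdot (pd e1 u (x.1, x.2, t)) (pd e1 u (x.1, x.2, t))
          + pdx (0, 1) η x
            * pd e1 (fun q => rdot (pd e1 u q) (pd e1 u q)) (x.1, x.2, t))
        - (pdx (1, 0) (pdx (0, 1) η) x * Phif ε u (x.1, x.2, t)
          + pdx (0, 1) η x * pd e1 (Phif ε u) (x.1, x.2, t)) := by
      rw [hG1def]
      rw [pdx_sub (((dη.fun_mul dA').fun_sub (dη1.fun_mul dR12')).fun_add (dη2.fun_mul dR11')) (dη2.fun_mul dPhi'),
        pdx_add ((dη.fun_mul dA').fun_sub (dη1.fun_mul dR12')) (dη2.fun_mul dR11'),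
        pdx_sub (dη.fun_mul dA') (dη1.fun_mul dR12'),
        pdx_mul dη dA', pdx_mul dη1 dR12', pdx_mul dη2 dR11', pdx_mul dη2 dPhi',
        eA, eR12, eR11, ePhi1]
    have hG2x : pdx (0, 1) G2 x
        = (pdx (0, 1) η x
            * crossR (pd e1 u (x.1, x.2, t)) (pd et u (x.1, x.2, t))
          + η x * pd e2 (fun q => crossR (pd e1 u q) (pd et u q)) (x.1, x.2, t))
        - (pdx (0, 1) (pdx (1, 0) η) x
            * rdot (pd e2 u (x.1, x.2, t)) (pd e2 u (x.1, x.2, t))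
          + pdx (1, 0) η x
            * pd e2 (fun q => rdot (pd e2 u q) (pd e2 u q)) (x.1, x.2, t))
        + (pdx (0, 1) (pdx (0, 1) η) x
            * rdot (pd e2 u (x.1, x.2, t)) (pd e1 u (x.1, x.2, t))
          + pdx (0, 1) η x
            * pd e2 (fun q => rdot (pd e2 u q) (pd e1 u q)) (x.1, x.2, t))
        + (pdx (0, 1) (pdx (1, 0) η) x * Phif ε u (x.1, x.2, t)
          + pdx (1, 0) η x * pd e2 (Phif ε u) (x.1, x.2, t)) := by
      rw [hG2def]
      rw [pdx_add (((dη.fun_mul dB').fun_sub (dη1.fun_mul dR22')).fun_add (dη2.fun_mul dR21')) (dη1.fun_mul dPhi'),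
        pdx_add ((dη.fun_mul dB').fun_sub (dη1.fun_mul dR22')) (dη2.fun_mul dR21'),
        pdx_sub (dη.fun_mul dB') (dη1.fun_mul dR22'),
        pdx_mul dη dB', pdx_mul dη1 dR22', pdx_mul dη2 dR21', pdx_mul dη1 dPhi',
        eB, eR22, eR21, ePhi2]
    -- the structural identities
    have hP1 : pd et (fun q => Jdet u q) (x.1, x.2, t)
        = pd e1 (fun q => crossR (pd et u q) (pd e2 u q)) (x.1, x.2, t)
          + pd e2 (fun q => crossR (pd e1 u q) (pd et u q)) (x.1, x.2, t) :=
      pd_et_Jdet hu hΩ hp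
    have hP3a := rdot_lap hu hΩ hp hεne heqp e2
    have hP3b := rdot_lap hu hΩ hp hεne heqp e1
    have hswap : crossR (pd e1 u (x.1, x.2, t)) (pd et u (x.1, x.2, t))
        = - crossR (pd et u (x.1, x.2, t)) (pd e1 u (x.1, x.2, t)) := crossR_swap _ _
    have hsym2 : pdx ((1:ℝ), (0:ℝ)) (pdx ((0:ℝ), (1:ℝ)) η) x
        = pdx ((0:ℝ), (1:ℝ)) (pdx ((1:ℝ), (0:ℝ)) η) x :=
      fd_apply_comm (hη.contDiffOn) isOpen_univ (Set.mem_univ x) _ _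
    rw [hL, hze, hG1x, hG2x, hRhsdef]
    simp only [Prod.mk.eta, zero_mul, zero_add]
    linear_combination (η x) * hP1 - (pdx (1, 0) η x) * hP3a
      - (pdx (0, 1) η x) * hswap + (pdx (0, 1) η x) * hP3b
      + (Phif ε u (x.1, x.2, t)) * hsym2
  rw [integral_congr_ae (Filter.Eventually.of_forall (fun x => KEY x))]
  have hi1 : IntegrableOn (fun x => pdx (1, 0) G1 x) fundSq volume :=
    integrableOn_fundSq (contDiff_fd hG1s _).continuous
  have hi2 : IntegrableOn (fun x => pdx (0, 1) G2 x) fundSq volume :=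
    integrableOn_fundSq (contDiff_fd hG2s _).continuous
  have hi3 : IntegrableOn Rhs fundSq volume := integrableOn_fundSq hRhsc
  have hi12 : IntegrableOn (fun x => pdx (1, 0) G1 x + pdx (0, 1) G2 x) fundSq volume :=
    hi1.add hi2
  rw [MeasureTheory.integral_add hi12 hi3, MeasureTheory.integral_add hi1 hi2]
  rw [integral_pdx1_zero hG1s hG1per, integral_pdx2_zero hG2s hG2per2]
  simp only [zero_add]
  -- match the right-hand side
  apply integral_congr_ae
  apply Filter.Eventually.of_forall
  intro x
  have hsym : pdx ((1:ℝ), (0:ℝ)) (pdx ((0:ℝ), (1:ℝ)) η) x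
      = pdx ((0:ℝ), (1:ℝ)) (pdx ((1:ℝ), (0:ℝ)) η) x :=
    fd_apply_comm (hη.contDiffOn) isOpen_univ (Set.mem_univ x) _ _
  rw [hRhsdef]
  simp only [Fin.sum_univ_two, dir, dir2, Jmat, Matrix.cons_val_zero, Matrix.cons_val_one,
    Matrix.head_cons, Matrix.head_fin_const]
  rw [hsym, rdot_comm (pd e2 u (x.1,x.2,t)) (pd e1 u (x.1,x.2,t)),
    rdot_comm (pd e2 u (x.1,x.2,t)) (pd e2 u (x.1,x.2,t)),
    rdot_comm (pd e1 u (x.1,x.2,t)) (pd e1 u (x.1,x.2,t))]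
  ring
end
end

section
/- There exists a constant c ≥ 1 such that for every n ∈ ℕ and all points ξ₁, …, ξ_n, η₁, …, η_n in the flat torus T² = ℝ²/ℤ² (not necessarily distinct), the measure μ = Σ_{i=1}^n δ_{ξ_i} − Σ_{i=1}^n δ_{η_i} satisfies c⁻¹ min_{π ∈ S_n} Σ_{i=1}^n d(ξ_i, η_{π(i)}) ≤ ‖μ‖_{M¹(T²)} ≤ min_{π ∈ S_n} Σ_{i=1}^n d(ξ_i, η_{π(i)}), where the minimum is over all permutations π of {1, …, n} and d is the geodesic distance on T². -/
/-!
If `‖ψ‖_∞ + ‖Dψ‖_∞ ≤ 1` then `‖Dψ‖ ≤ 1`, so the test function is 1-Lipschitz for the geodesic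
distance and its pairing with `μ` is at most the cost of any matching. Conversely, for an optimal
matching `ξᵢ ↦ ηᵢ` no cycle of rematchings has negative cost, so Rockafellar's potential (the
cheapest alternating chain leaving a point) is 1-Lipschitz and satisfies
`φ(ξᵢ) - φ(ηᵢ) ≥ d(ξᵢ, ηᵢ)` (discrete Kantorovich duality). Normalised to vanish at one point and
divided by `3`, it has sup norm at most `1/3` (the torus has diameter at most `1`), and its lift to
`ℝ × ℝ`, which carries the sup norm, is `√2/3`-Lipschitz; mollifying the lift gives admissible test
functions whose pairings with `μ` converge to that of the potential.
-/

noncomputable section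

open MeasureTheory

/-- The flat torus `T² = ℝ²/ℤ²`. -/
abbrev T2 : Type := AddCircle (1:ℝ) × AddCircle (1:ℝ)

/-- The projection `ℝ² → T²`. -/
def proj (x : ℝ × ℝ) : T2 := ((x.1 : AddCircle (1:ℝ)), (x.2 : AddCircle (1:ℝ)))

/-- `φ : T² → ℝ` is of class `C¹`, witnessed by a `C¹` lift `ψ` to `ℝ²`. -/
def IsC1 (φ : T2 → ℝ) (ψ : ℝ × ℝ → ℝ) : Prop :=
  ContDiff ℝ 1 ψ ∧ ∀ x : ℝ × ℝ, φ (proj x) = ψ x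

/-- Integration of a (continuous) function against a finite signed measure, via the
Jordan decomposition. -/
def spair (μ : SignedMeasure T2) (φ : T2 → ℝ) : ℝ :=
  (∫ y, φ y ∂μ.toJordanDecomposition.posPart) -
    ∫ y, φ y ∂μ.toJordanDecomposition.negPart

/-- The `M¹(T²)` norm of a finite signed measure: the dual norm over
`C¹` test functions `φ` with `‖φ‖_∞ + ‖Dφ‖_∞ ≤ 1`. -/
def M1norm (μ : SignedMeasure T2) : ℝ :=
  sSup {r : ℝ | ∃ φ : T2 → ℝ, ∃ ψ : ℝ × ℝ → ℝ, IsC1 φ ψ ∧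
    (⨆ x : ℝ × ℝ, |ψ x|) + (⨆ x : ℝ × ℝ, ‖fderiv ℝ ψ x‖) ≤ 1 ∧ r = spair μ φ}

/-- The Dirac mass at a point of `T²`, as a signed measure. -/
def diracSM (p : T2) : SignedMeasure T2 := (Measure.dirac p).toSignedMeasure

/-- The geodesic distance on the flat torus `T² = ℝ²/ℤ²`: the Euclidean combination of
the (geodesic) distances in the two circle factors. -/
def gdist (p q : T2) : ℝ := Real.sqrt (dist p.1 q.1 ^ 2 + dist p.2 q.2 ^ 2)

open Topology
open scoped Convolution NNReal

section Geometry

theorem proj_add (a b : ℝ × ℝ) : proj (a + b) = proj a + proj b := rfl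

theorem proj_sub (a b : ℝ × ℝ) : proj (a - b) = proj a - proj b := rfl

theorem continuous_proj : Continuous proj :=
  continuous_quotient_mk'.prodMap continuous_quotient_mk'

theorem isQuotientMap_proj : IsQuotientMap proj :=
  (QuotientAddGroup.isOpenMap_coe.prodMap QuotientAddGroup.isOpenMap_coe).isQuotientMap
    continuous_proj (QuotientAddGroup.mk_surjective.prodMap QuotientAddGroup.mk_surjective)

theorem exists_comp_proj_eq {F : ℝ × ℝ → ℝ} (hF : Continuous F)
    (h : ∀ a b, proj a = proj b → F a = F b) : ∃ f : C(T2, ℝ), ∀ x, f (proj x) = F x :=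
  ⟨isQuotientMap_proj.lift (f := ⟨proj, continuous_proj⟩) ⟨F, hF⟩ (h · ·),
    DFunLike.congr_fun <|
      isQuotientMap_proj.lift_comp (f := ⟨proj, continuous_proj⟩) ⟨F, hF⟩ (h · ·)⟩

theorem bddAbove_range_of_proj_eq {F : ℝ × ℝ → ℝ} (hF : Continuous F)
    (h : ∀ a b, proj a = proj b → F a = F b) : BddAbove (Set.range F) := by
  obtain ⟨f, hf⟩ := exists_comp_proj_eq hF h
  refine (isCompact_range f.continuous).bddAbove.mono ?_
  rintro _ ⟨x, rfl⟩
  exact ⟨proj x, hf x⟩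

theorem UnitAddCircle.dist_coe_le (x y : ℝ) : dist (x : UnitAddCircle) y ≤ dist x y := by
  rw [dist_eq_norm, dist_eq_norm, ← QuotientAddGroup.mk_sub]
  exact QuotientAddGroup.norm_mk_le_norm

theorem dist_proj_le (a b : ℝ × ℝ) : dist (proj a) (proj b) ≤ dist a b :=
  max_le_max (UnitAddCircle.dist_coe_le _ _) (UnitAddCircle.dist_coe_le _ _)

theorem UnitAddCircle.exists_coe_eq_abs_eq_norm (u : UnitAddCircle) :
    ∃ a : ℝ, (a : UnitAddCircle) = u ∧ |a| = ‖u‖ := by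
  induction u using QuotientAddGroup.induction_on with | H x =>
  refine ⟨x - round x, ?_, by rw [UnitAddCircle.norm_eq]⟩
  rw [QuotientAddGroup.mk_sub, sub_eq_self]
  simp

theorem exists_proj_eq_norm_eq (u : T2) : ∃ v : ℝ × ℝ, proj v = u ∧ ‖v‖ = ‖u‖ := by
  obtain ⟨a, ha, ha'⟩ := UnitAddCircle.exists_coe_eq_abs_eq_norm u.1
  obtain ⟨b, hb, hb'⟩ := UnitAddCircle.exists_coe_eq_abs_eq_norm u.2
  exact ⟨(a, b), Prod.ext ha hb, by simp [Prod.norm_def, ha', hb']⟩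

theorem exists_proj_eq_dist_eq (p q : T2) :
    ∃ a b : ℝ × ℝ, proj a = p ∧ proj b = q ∧ dist a b = dist p q := by
  obtain ⟨v, hv, hv'⟩ := exists_proj_eq_norm_eq (p - q)
  obtain ⟨b, rfl⟩ := isQuotientMap_proj.surjective q
  exact ⟨b + v, b, by rw [proj_add, hv, add_sub_cancel], rfl, by
    rw [dist_eq_norm, add_sub_cancel_left, hv', dist_eq_norm]⟩

theorem gdist_eq_dist (p q : T2) : gdist p q = dist (WithLp.toLp 2 p) (WithLp.toLp 2 q) := by
  rw [WithLp.prod_dist_eq_of_L2]; rfl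

theorem dist_le_gdist (p q : T2) : dist p q ≤ gdist p q := by
  refine max_le ?_ ?_ <;> refine Real.le_sqrt_of_sq_le ?_ <;>
    nlinarith [sq_nonneg (dist p.1 q.1), sq_nonneg (dist p.2 q.2)]

theorem gdist_le_sqrt_two_mul_dist (p q : T2) : gdist p q ≤ √2 * dist p q := by
  rw [← Real.sqrt_sq dist_nonneg, ← Real.sqrt_mul zero_le_two]
  refine Real.sqrt_le_sqrt ?_
  have h1 : dist p.1 q.1 ≤ dist p q := le_max_left _ _
  have h2 : dist p.2 q.2 ≤ dist p q := le_max_right _ _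
  nlinarith [dist_nonneg (x := p.1) (y := q.1), dist_nonneg (x := p.2) (y := q.2)]

theorem T2.dist_le_half (p q : T2) : dist p q ≤ 1 / 2 := by
  refine max_le ?_ ?_ <;> rw [dist_eq_norm] <;>
    simpa using AddCircle.norm_le_half_period 1 one_ne_zero

theorem gdist_le_one (p q : T2) : gdist p q ≤ 1 := by
  nlinarith [gdist_le_sqrt_two_mul_dist p q, T2.dist_le_half p q, dist_nonneg (x := p) (y := q),
    Real.sqrt_nonneg 2, Real.sqrt_two_lt_three_halves]

end Geometry

theorem List.zip_rotate_one_eq_map_formPerm {β : Type*} [DecidableEq β] {l : List β}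
    (hl : l.Nodup) : l.zip (l.rotate 1) = l.map fun j => (j, l.formPerm j) := by
  refine List.ext_getElem (by simp) fun k h₁ h₂ => ?_
  simp [List.getElem_rotate, List.formPerm_apply_getElem _ hl]

section Potential

variable {ι α : Type*} [PseudoMetricSpace α] (x y : ι → α)

/-- The change of matching cost along the alternating chain `z → y i₁, x i₁ → y i₂, …`, in which
each `y iₖ` is taken from its partner `x iₖ` and given to the previous point. -/
def chainCost : List ι → α → ℝ
  | [], _ => 0
  | i :: L, z => dist z (y i) - dist (x i) (y i) + chainCost L (x i)

theorem chainCost_append_cons (A t : List ι) (i : ι) (z : α) :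
    chainCost x y (A ++ i :: t) z = chainCost x y (A ++ [i]) z + chainCost x y t (x i) := by
  induction A generalizing z with
  | nil => simp [chainCost]
  | cons j A ih => simp only [List.cons_append, chainCost, ih]; ring

theorem chainCost_le_add_dist (L : List ι) (z w : α) :
    chainCost x y L z ≤ chainCost x y L w + dist z w := by
  cases L with
  | nil => simp [chainCost]
  | cons i L => simp only [chainCost]; linarith [dist_triangle z w (y i)]

theorem chainCost_eq_sum_zip (B : List ι) (j : ι) :
    chainCost x y B (x j) =
      (((j :: B).zip B).map fun p => dist (x p.1) (y p.2) - dist (x p.2) (y p.2)).sum := by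
  induction B generalizing j with
  | nil => rfl
  | cons k B ih => simp [chainCost, ih k]

theorem chainCost_cycle [DecidableEq ι] (i : ι) (s : List ι) (hl : (i :: s).Nodup) :
    chainCost x y (s ++ [i]) (x i) = ∑ j ∈ (i :: s).toFinset,
      (dist (x j) (y ((i :: s).formPerm j)) - dist (x j) (y j)) := by
  set l := i :: s
  have hzip : (i :: (s ++ [i])).zip (s ++ [i]) = l.zip (l.rotate 1) := by
    rw [show i :: (s ++ [i]) = l ++ [i] from rfl, show s ++ [i] = l.rotate 1 by simp [l],
      ← List.append_nil (l.rotate 1), List.zip_append (by simp), List.zip_nil_right,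
      List.append_nil, List.append_nil]
  rw [chainCost_eq_sum_zip, hzip, List.zip_rotate_one_eq_map_formPerm hl, List.map_map,
    ← List.sum_toFinset _ hl, Finset.sum_sub_distrib,
    ← l.formPerm.sum_comp _ (fun j => dist (x j) (y j)) (List.support_formPerm_le' l),
    ← Finset.sum_sub_distrib]
  rfl

variable [Fintype ι]

theorem chainCost_cycle_nonneg
    (hmin : ∀ σ : Equiv.Perm ι, ∑ j, dist (x j) (y j) ≤ ∑ j, dist (x j) (y (σ j)))
    (i : ι) (s : List ι) (hl : (i :: s).Nodup) : 0 ≤ chainCost x y (s ++ [i]) (x i) := by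
  classical
  rw [chainCost_cycle x y i s hl, Finset.sum_subset (Finset.subset_univ _), Finset.sum_sub_distrib]
  · linarith [hmin (i :: s).formPerm]
  · intro j _ hj
    rw [List.formPerm_apply_of_notMem (by simpa using hj), sub_self]

/-- Rockafellar's potential of the matching `x i ↦ y i`. -/
def potential (z : α) : ℝ := ⨅ L : {L : List ι // L.Nodup}, chainCost x y L z

theorem potential_le_chainCost {L : List ι} (hL : L.Nodup) (z : α) :
    potential x y z ≤ chainCost x y L z :=
  ciInf_le (Set.finite_range _).bddBelow (⟨L, hL⟩ : {L : List ι // L.Nodup})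

theorem exists_chainCost_eq_potential (z : α) :
    ∃ L : List ι, L.Nodup ∧ chainCost x y L z = potential x y z := by
  have : Nonempty {L : List ι // L.Nodup} := ⟨⟨[], List.nodup_nil⟩⟩
  obtain ⟨⟨L, hL⟩, h⟩ := exists_eq_ciInf_of_finite (f := fun L : {L : List ι // L.Nodup} =>
    chainCost x y L z)
  exact ⟨L, hL, h⟩

theorem potential_le_add_dist (z w : α) : potential x y z ≤ potential x y w + dist z w := by
  obtain ⟨L, hL, hw⟩ := exists_chainCost_eq_potential x y w
  rw [← hw]
  exact (potential_le_chainCost x y hL z).trans (chainCost_le_add_dist x y L z w)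

/-- If the optimal chain from `x i` already passes through `i`, the part before `i` is a cycle,
which costs nothing to drop. -/
theorem potential_le_of_isMin
    (hmin : ∀ σ : Equiv.Perm ι, ∑ j, dist (x j) (y j) ≤ ∑ j, dist (x j) (y (σ j)))
    (z : α) (i : ι) :
    potential x y z ≤ dist z (y i) - dist (x i) (y i) + potential x y (x i) := by
  obtain ⟨L, hL, hval⟩ := exists_chainCost_eq_potential x y (x i)
  rw [← hval]
  by_cases hi : i ∈ L
  · obtain ⟨s, t, rfl⟩ := List.append_of_mem hi
    rw [List.nodup_append, List.nodup_cons] at hL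
    obtain ⟨hs, ⟨hit, ht⟩, hdisj⟩ := hL
    have hcycle := chainCost_cycle_nonneg x y hmin i s
      (List.nodup_cons.2 ⟨fun h => hdisj i h i List.mem_cons_self rfl, hs⟩)
    calc potential x y z ≤ chainCost x y (i :: t) z :=
          potential_le_chainCost x y (List.nodup_cons.2 ⟨hit, ht⟩) z
      _ ≤ _ := by rw [chainCost_append_cons, chainCost]; linarith
  · exact potential_le_chainCost x y (List.nodup_cons.2 ⟨hi, hL⟩) z

theorem exists_lipschitz_potential_of_isMin
    (hmin : ∀ σ : Equiv.Perm ι, ∑ j, dist (x j) (y j) ≤ ∑ j, dist (x j) (y (σ j))) :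
    ∃ φ : α → ℝ, LipschitzWith 1 φ ∧ ∀ i, dist (x i) (y i) ≤ φ (x i) - φ (y i) := by
  refine ⟨potential x y, LipschitzWith.of_le_add (potential_le_add_dist x y), fun i => ?_⟩
  have := potential_le_of_isMin x y hmin (y i) i
  rw [dist_self] at this
  linarith

end Potential

namespace ContDiffBump

variable {E : Type*} [NormedAddCommGroup E] [NormedSpace ℝ E] [FiniteDimensional ℝ E]
  [MeasurableSpace E] [BorelSpace E] {μ : Measure E} [μ.IsAddHaarMeasure] (φ : ContDiffBump (0 : E))

theorem abs_integral_normed_smul_le {u : E → ℝ} {M : ℝ} (hu : ∀ t, |u t| ≤ M) :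
    |∫ t, φ.normed μ t • u t ∂μ| ≤ M := by
  have key := norm_integral_le_of_norm_le (f := fun t => φ.normed μ t • u t)
    ((φ.integrable_normed (μ := μ)).mul_const M) (Filter.Eventually.of_forall fun t => ?_)
  · rwa [integral_mul_const, φ.integral_normed, one_mul] at key
  · rw [norm_smul, Real.norm_of_nonneg (φ.nonneg_normed t)]
    exact mul_le_mul_of_nonneg_left (hu t) (φ.nonneg_normed t)

theorem abs_convolution_le {g : E → ℝ} {C : ℝ} (hg : ∀ x, |g x| ≤ C) (x : E) :
    |(φ.normed μ ⋆[ContinuousLinearMap.lsmul ℝ ℝ, μ] g) x| ≤ C := by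
  rw [convolution_lsmul]
  exact φ.abs_integral_normed_smul_le fun t => hg (x - t)

theorem lipschitzWith_convolution {g : E → ℝ} {K : ℝ≥0} (hg : LipschitzWith K g) :
    LipschitzWith K (φ.normed μ ⋆[ContinuousLinearMap.lsmul ℝ ℝ, μ] g) := by
  have hconv := (φ.hasCompactSupport_normed (μ := μ)).convolutionExists_left
    (ContinuousLinearMap.lsmul ℝ ℝ) φ.continuous_normed (μ := μ) hg.continuous.locallyIntegrable
  refine LipschitzWith.of_dist_le_mul fun a b => ?_
  have hint : ∀ x, Integrable (fun t => φ.normed μ t • g (x - t)) μ := hconv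
  rw [Real.dist_eq, convolution_lsmul, convolution_lsmul, ← integral_sub (hint a) (hint b)]
  simp_rw [← smul_sub]
  refine φ.abs_integral_normed_smul_le fun t => ?_
  rw [← Real.dist_eq, ← dist_sub_right a b t]
  exact hg.dist_le_mul _ _

theorem abs_convolution_sub_le {g : E → ℝ} {K : ℝ≥0} (hg : LipschitzWith K g) (x : E) :
    |(φ.normed μ ⋆[ContinuousLinearMap.lsmul ℝ ℝ, μ] g) x - g x| ≤ K * φ.rOut := by
  rw [← Real.dist_eq]
  refine φ.dist_normed_convolution_le hg.continuous.aestronglyMeasurable fun y hy => ?_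
  exact (hg.dist_le_mul y x).trans (mul_le_mul_of_nonneg_left (Metric.mem_ball.1 hy).le K.2)

end ContDiffBump

theorem Function.Periodic.convolution {G : Type*} [AddCommGroup G] [MeasurableSpace G]
    {μ : Measure G} {f g : G → ℝ} {v : G} (hg : Function.Periodic g v) :
    Function.Periodic (f ⋆[ContinuousLinearMap.lsmul ℝ ℝ, μ] g) v := fun x => by
  rw [convolution_lsmul, convolution_lsmul]
  simp only [add_sub_right_comm x v, hg _]

section TestFunctions

def c1Norm (ψ : ℝ × ℝ → ℝ) : ℝ := (⨆ x : ℝ × ℝ, |ψ x|) + ⨆ x : ℝ × ℝ, ‖fderiv ℝ ψ x‖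

variable {φ : T2 → ℝ} {ψ : ℝ × ℝ → ℝ}

theorem IsC1.continuous (h : IsC1 φ ψ) : Continuous φ :=
  isQuotientMap_proj.continuous_iff.2 (by simpa only [Function.comp_def, h.2] using h.1.continuous)

theorem IsC1.fderiv_eq_of_proj_eq (h : IsC1 φ ψ) {a b : ℝ × ℝ} (hab : proj a = proj b) :
    fderiv ℝ ψ a = fderiv ℝ ψ b := by
  have hper : (fun x => ψ (x + (b - a))) = ψ := funext fun x => by
    rw [← h.2, ← h.2, proj_add, proj_sub, hab, sub_self, add_zero]
  calc fderiv ℝ ψ a = fderiv ℝ (fun x => ψ (x + (b - a))) a := by rw [hper]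
    _ = fderiv ℝ ψ b := by rw [fderiv_comp_add_right, add_sub_cancel]

/-- Without this bound the supremum in `c1Norm` would be the junk value `0`. -/
theorem IsC1.bddAbove_range_norm_fderiv (h : IsC1 φ ψ) :
    BddAbove (Set.range fun x => ‖fderiv ℝ ψ x‖) :=
  bddAbove_range_of_proj_eq (h.1.continuous_fderiv one_ne_zero).norm fun _ _ hab => by
    rw [h.fderiv_eq_of_proj_eq hab]

theorem IsC1.norm_fderiv_le_one (h : IsC1 φ ψ) (hψ : c1Norm ψ ≤ 1) (x : ℝ × ℝ) :
    ‖fderiv ℝ ψ x‖ ≤ 1 := by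
  have := le_ciSup h.bddAbove_range_norm_fderiv x
  have := Real.iSup_nonneg fun x => abs_nonneg (ψ x)
  unfold c1Norm at hψ
  linarith

theorem IsC1.sub_le_gdist (h : IsC1 φ ψ) (hψ : c1Norm ψ ≤ 1) (p q : T2) :
    φ p - φ q ≤ gdist p q := by
  obtain ⟨a, b, rfl, rfl, hab⟩ := exists_proj_eq_dist_eq p q
  rw [h.2, h.2]
  calc ψ a - ψ b ≤ ‖ψ a - ψ b‖ := le_abs_self _
    _ ≤ 1 * ‖a - b‖ := Convex.norm_image_sub_le_of_norm_fderiv_le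
          (fun x _ => (h.1.differentiable one_ne_zero) x) (fun x _ => h.norm_fderiv_le_one hψ x)
          convex_univ trivial trivial
    _ ≤ gdist (proj a) (proj b) := by
          rw [one_mul, ← dist_eq_norm, hab]; exact dist_le_gdist _ _

theorem exists_isC1_of_periodic (hψ : ContDiff ℝ 1 ψ)
    (hper : ∀ v, proj v = 0 → Function.Periodic ψ v) : ∃ φ : T2 → ℝ, IsC1 φ ψ := by
  obtain ⟨φ, hφ⟩ := exists_comp_proj_eq hψ.continuous fun a b hab =>
    calc ψ a = ψ (b + (a - b)) := by rw [add_sub_cancel]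
      _ = ψ b := hper (a - b) (by rw [proj_sub, hab, sub_self]) b
  exact ⟨φ, hψ, hφ⟩

/-- The test function is obtained by mollifying `χ ∘ proj` at scale `r`. -/
theorem exists_isC1_abs_sub_le {χ : T2 → ℝ} {L : ℝ≥0} {C : ℝ} (hχ : LipschitzWith L (χ ∘ proj))
    (hC : ∀ p, |χ p| ≤ C) (hLC : C + L ≤ 1) {r : ℝ} (hr : 0 < r) :
    ∃ φ ψ, IsC1 φ ψ ∧ c1Norm ψ ≤ 1 ∧ ∀ p, |φ p - χ p| ≤ L * r := by
  let bump : ContDiffBump (0 : ℝ × ℝ) := ⟨r / 2, r, half_pos hr, half_lt_self hr⟩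
  set ψ := bump.normed volume ⋆[ContinuousLinearMap.lsmul ℝ ℝ, volume] (χ ∘ proj)
  have hψ : ContDiff ℝ 1 ψ := bump.hasCompactSupport_normed.contDiff_convolution_left _
    bump.contDiff_normed hχ.continuous.locallyIntegrable
  obtain ⟨φ, hφ⟩ := exists_isC1_of_periodic hψ fun v hv =>
    Function.Periodic.convolution fun x => by
      simp only [Function.comp_apply, proj_add, hv, add_zero]
  have hC0 : 0 ≤ C := (abs_nonneg _).trans (hC 0)
  refine ⟨φ, ψ, hφ, ?_, fun p => ?_⟩
  · have h1 : (⨆ x, |ψ x|) ≤ C := Real.iSup_le (bump.abs_convolution_le fun x => hC (proj x)) hC0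
    have h2 : (⨆ x, ‖fderiv ℝ ψ x‖) ≤ L :=
      Real.iSup_le (fun _ => norm_fderiv_le_of_lipschitz ℝ (bump.lipschitzWith_convolution hχ))
        L.2
    unfold c1Norm
    linarith
  · obtain ⟨x, rfl⟩ := isQuotientMap_proj.surjective p
    rw [hφ.2]
    exact bump.abs_convolution_sub_le hχ x

end TestFunctions

section Pairing

theorem MeasureTheory.Measure.toSignedMeasure_finsetSum {α ι : Type*} [MeasurableSpace α]
    (s : Finset ι) (μ : ι → Measure α) [∀ i, IsFiniteMeasure (μ i)] :
    (∑ i ∈ s, μ i).toSignedMeasure = ∑ i ∈ s, (μ i).toSignedMeasure := by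
  classical
  induction s using Finset.induction_on with
  | empty => simp
  | insert i s hi ih => simp only [Finset.sum_insert hi, Measure.toSignedMeasure_add, ih]

theorem spair_toSignedMeasure_sub (A B : Measure T2) [IsFiniteMeasure A] [IsFiniteMeasure B]
    {φ : T2 → ℝ} (hφ : Continuous φ) :
    spair (A.toSignedMeasure - B.toSignedMeasure) φ = ∫ p, φ p ∂A - ∫ p, φ p ∂B := by
  set j := (A.toSignedMeasure - B.toSignedMeasure).toJordanDecomposition
  have hint (ν : Measure T2) [IsFiniteMeasure ν] : Integrable φ ν :=
    hφ.integrable_of_hasCompactSupport (.of_compactSpace φ)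
  have hjordan : A + j.negPart = j.posPart + B := by
    rw [← Measure.toSignedMeasure_eq_toSignedMeasure_iff, Measure.toSignedMeasure_add,
      Measure.toSignedMeasure_add, ← sub_eq_sub_iff_add_eq_add]
    exact (SignedMeasure.toSignedMeasure_toJordanDecomposition _).symm
  have := congrArg (fun ν => ∫ p, φ p ∂ν) hjordan
  simp only [integral_add_measure (hint _) (hint _)] at this
  unfold spair
  linarith

variable {n : ℕ}

theorem spair_sum_diracSM_sub {φ : T2 → ℝ} (hφ : Continuous φ) (ξ η : Fin n → T2) :
    spair ((∑ i, diracSM (ξ i)) - ∑ i, diracSM (η i)) φ = ∑ i, φ (ξ i) - ∑ i, φ (η i) := by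
  have hint (p : T2) : Integrable φ (Measure.dirac p) :=
    hφ.integrable_of_hasCompactSupport (.of_compactSpace φ)
  simp only [diracSM, ← Measure.toSignedMeasure_finsetSum]
  rw [spair_toSignedMeasure_sub _ _ hφ, integral_finsetSum_measure fun i _ => hint _,
    integral_finsetSum_measure fun i _ => hint _]
  simp only [integral_dirac]

theorem spair_sum_diracSM_sub_le {φ : T2 → ℝ} {ψ : ℝ × ℝ → ℝ} (hφ : IsC1 φ ψ)
    (hψ : c1Norm ψ ≤ 1) (ξ η : Fin n → T2) (π : Equiv.Perm (Fin n)) :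
    spair ((∑ i, diracSM (ξ i)) - ∑ i, diracSM (η i)) φ ≤ ∑ i, gdist (ξ i) (η (π i)) := by
  rw [spair_sum_diracSM_sub hφ.continuous, ← Equiv.sum_comp π (fun i => φ (η i)),
    ← Finset.sum_sub_distrib]
  exact Finset.sum_le_sum fun i _ => hφ.sub_le_gdist hψ _ _

end Pairing

section M1Norm

variable {n : ℕ}

theorem M1norm_le {μ : SignedMeasure T2} {B : ℝ}
    (h : ∀ φ ψ, IsC1 φ ψ → c1Norm ψ ≤ 1 → spair μ φ ≤ B) : M1norm μ ≤ B := by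
  refine csSup_le ⟨0, 0, 0, ⟨contDiff_const, fun _ => rfl⟩, ?_, ?_⟩ ?_
  · simp
  · simp [spair]
  · rintro _ ⟨φ, ψ, hφ, hψ, rfl⟩
    exact h φ ψ hφ hψ

theorem spair_le_M1norm {μ : SignedMeasure T2} {B : ℝ}
    (h : ∀ φ ψ, IsC1 φ ψ → c1Norm ψ ≤ 1 → spair μ φ ≤ B) {φ : T2 → ℝ} {ψ : ℝ × ℝ → ℝ}
    (hφ : IsC1 φ ψ) (hψ : c1Norm ψ ≤ 1) : spair μ φ ≤ M1norm μ :=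
  le_csSup ⟨B, by rintro _ ⟨φ, ψ, hφ, hψ, rfl⟩; exact h φ ψ hφ hψ⟩ ⟨φ, ψ, hφ, hψ, rfl⟩

theorem sum_sub_sum_le_M1norm {χ : T2 → ℝ} {L : ℝ≥0} {C : ℝ} (hχ : LipschitzWith L (χ ∘ proj))
    (hC : ∀ p, |χ p| ≤ C) (hLC : C + L ≤ 1) (ξ η : Fin n → T2) :
    ∑ i, χ (ξ i) - ∑ i, χ (η i) ≤ M1norm ((∑ i, diracSM (ξ i)) - ∑ i, diracSM (η i)) := by
  refine le_of_forall_pos_le_add fun ε hε => ?_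
  set k : ℝ := 2 * n * L
  obtain ⟨φ, ψ, hφ, hψ, happrox⟩ :=
    exists_isC1_abs_sub_le hχ hC hLC (r := ε / (k + 1)) (by positivity)
  have hM1 := spair_le_M1norm (fun φ ψ hφ hψ => spair_sum_diracSM_sub_le hφ hψ ξ η 1) hφ hψ
  rw [spair_sum_diracSM_sub hφ.continuous] at hM1
  have hsum (ζ : Fin n → T2) : |∑ i, φ (ζ i) - ∑ i, χ (ζ i)| ≤ n * (L * (ε / (k + 1))) := by
    rw [← Finset.sum_sub_distrib]
    refine (Finset.abs_sum_le_sum_abs _ _).trans ?_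
    simpa using Finset.sum_le_sum fun i (_ : i ∈ Finset.univ) => happrox (ζ i)
  have hk : k * (ε / (k + 1)) ≤ ε := by
    rw [mul_div_assoc', div_le_iff₀ (by positivity)]
    nlinarith
  have := abs_le.1 (hsum ξ)
  have := abs_le.1 (hsum η)
  linarith

theorem sum_sub_sum_le_three_mul_M1norm {φ : T2 → ℝ} (hφ : ∀ p q, |φ p - φ q| ≤ gdist p q)
    (ξ η : Fin n → T2) :
    ∑ i, φ (ξ i) - ∑ i, φ (η i) ≤ 3 * M1norm ((∑ i, diracSM (ξ i)) - ∑ i, diracSM (η i)) := by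
  set χ : T2 → ℝ := fun p => (φ p - φ 0) / 3
  have hχ : LipschitzWith (NNReal.sqrt 2 / 3) (χ ∘ proj) := by
    refine LipschitzWith.of_dist_le_mul fun a b => ?_
    have := (hφ (proj a) (proj b)).trans (gdist_le_sqrt_two_mul_dist _ _)
    have := dist_proj_le a b
    simp only [Function.comp_apply, Real.dist_eq, χ, NNReal.coe_div, Real.coe_sqrt,
      NNReal.coe_ofNat]
    rw [← sub_div, sub_sub_sub_cancel_right, abs_div, abs_of_pos (a := (3 : ℝ)) three_pos]
    nlinarith [Real.sqrt_nonneg 2]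
  have hC (p : T2) : |χ p| ≤ 1 / 3 := by
    rw [abs_div, abs_of_pos (a := (3 : ℝ)) three_pos]
    exact div_le_div_of_nonneg_right ((hφ p 0).trans (gdist_le_one p 0)) zero_le_three
  have hCL : 1 / 3 + ((NNReal.sqrt 2 / 3 : ℝ≥0) : ℝ) ≤ 1 := by
    push_cast
    nlinarith [Real.sqrt_two_lt_three_halves]
  have hsum := sum_sub_sum_le_M1norm hχ hC hCL ξ η
  have hχsum : ∑ i, χ (ξ i) - ∑ i, χ (η i) = (∑ i, φ (ξ i) - ∑ i, φ (η i)) / 3 := by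
    simp only [χ, ← Finset.sum_div, Finset.sum_sub_distrib]
    ring
  linarith

theorem exists_potential_gdist {ξ ζ : Fin n → T2}
    (hmin : ∀ σ : Equiv.Perm (Fin n), ∑ i, gdist (ξ i) (ζ i) ≤ ∑ i, gdist (ξ i) (ζ (σ i))) :
    ∃ φ : T2 → ℝ, (∀ p q, |φ p - φ q| ≤ gdist p q) ∧
      ∑ i, gdist (ξ i) (ζ i) ≤ ∑ i, φ (ξ i) - ∑ i, φ (ζ i) := by
  simp only [gdist_eq_dist] at hmin ⊢
  obtain ⟨φ, hlip, hcost⟩ := exists_lipschitz_potential_of_isMin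
    (fun i => WithLp.toLp 2 (ξ i)) (fun i => WithLp.toLp 2 (ζ i)) hmin
  refine ⟨fun p => φ (WithLp.toLp 2 p), fun p q => ?_, ?_⟩
  · simpa [← Real.dist_eq] using hlip.dist_le_mul (WithLp.toLp 2 p) (WithLp.toLp 2 q)
  · rw [← Finset.sum_sub_distrib]
    exact Finset.sum_le_sum fun i _ => hcost i

end M1Norm

/-- there is a constant `c ≥ 1` such that for every `n` and all points
`ξ₁,…,ξ_n, η₁,…,η_n ∈ T²`, the measure `μ = Σᵢ δ_{ξᵢ} − Σᵢ δ_{ηᵢ}` satisfies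
`c⁻¹ min_{π ∈ Sₙ} Σᵢ d(ξᵢ, η_{π(i)}) ≤ ‖μ‖_{M¹} ≤ min_{π ∈ Sₙ} Σᵢ d(ξᵢ, η_{π(i)})`. -/
theorem M1norm_dirac_difference_equiv_min_matching :
    ∃ c : ℝ, 1 ≤ c ∧ ∀ (n : ℕ) (ξ η : Fin n → T2),
      c⁻¹ * (⨅ π : Equiv.Perm (Fin n), ∑ i, gdist (ξ i) (η (π i)))
          ≤ M1norm ((∑ i, diracSM (ξ i)) - ∑ i, diracSM (η i)) ∧
      M1norm ((∑ i, diracSM (ξ i)) - ∑ i, diracSM (η i))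
          ≤ ⨅ π : Equiv.Perm (Fin n), ∑ i, gdist (ξ i) (η (π i)) := by
  refine ⟨3, by norm_num, fun n ξ η => ⟨?_, le_ciInf fun π =>
    M1norm_le fun φ ψ hφ hψ => spair_sum_diracSM_sub_le hφ hψ ξ η π⟩⟩
  obtain ⟨π₀, hπ₀⟩ := exists_eq_ciInf_of_finite
    (f := fun π : Equiv.Perm (Fin n) => ∑ i, gdist (ξ i) (η (π i)))
  have hmin (σ : Equiv.Perm (Fin n)) :
      ∑ i, gdist (ξ i) (η (π₀ i)) ≤ ∑ i, gdist (ξ i) (η (π₀ (σ i))) :=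
    hπ₀ ▸ ciInf_le (Set.finite_range _).bddBelow (σ.trans π₀)
  obtain ⟨φ, hφ, hcost⟩ := exists_potential_gdist hmin
  rw [← hπ₀, inv_mul_le_iff₀ three_pos]
  calc ∑ i, gdist (ξ i) (η (π₀ i)) ≤ ∑ i, φ (ξ i) - ∑ i, φ (η (π₀ i)) := hcost
    _ = ∑ i, φ (ξ i) - ∑ i, φ (η i) := by rw [Equiv.sum_comp π₀ (fun i => φ (η i))]
    _ ≤ 3 * M1norm ((∑ i, diracSM (ξ i)) - ∑ i, diracSM (η i)) :=
      sum_sub_sum_le_three_mul_M1norm hφ ξ η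
end
end
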